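/- arXiv:2301.02923 — 3 statements merged into one kernel-verified Lean document; each statement's English description precedes it below -/
import Mathlib

section
/- Let Ω ⊂ ℝ^d be a bounded domain, ρ a continuous nonnegative kernel supported in [0,R₀) with R₀ ∈ (0,1), η_δ as in the localization assumptions, and define the symmetric kernel ρ_{δ,2}(x,y) = ½[η_δ(x)^{−d−2} ρ(|y−x|/η_δ(x)) + η_δ(y)^{−d−2} ρ(|y−x|/η_δ(y))] and Φ_{δ,2}(x) = ∫_Ω ρ_{δ,2}(x,y) dy. Then for every p ∈ [1,∞] and every u ∈ L^p(Ω), the function x ↦ Φ_{δ,2}(x)^{−1} · 2∫_Ω ρ_{δ,2}(x,y)(u(x)−u(y)) dy belongs to L^p(Ω), with norm bounded by C‖u‖_{L^p(Ω)} for a constant C depending only on d, p, ρ, and Ω. -/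
open MeasureTheory Metric
open scoped ENNReal

open Filter
open scoped Topology

section AuxLemmas

lemma aux_jointAESM {d : ℕ} (Ω : Set (EuclideanSpace ℝ (Fin d))) (hΩm : MeasurableSet Ω)
    (r : EuclideanSpace ℝ (Fin d) → EuclideanSpace ℝ (Fin d) → ℝ)
    (hcont : ∀ y, Continuous (r y))
    (hsec : ∀ x ∈ Ω, AEStronglyMeasurable (fun y => r y x) (volume.restrict Ω)) :
    AEStronglyMeasurable (fun z : EuclideanSpace ℝ (Fin d) × EuclideanSpace ℝ (Fin d) => r z.2 z.1)
      ((volume.restrict Ω).prod (volume.restrict Ω)) := by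
  classical
  set ν := (volume.restrict Ω : Measure (EuclideanSpace ℝ (Fin d)))
  rcases Ω.eq_empty_or_nonempty with hΩe | ⟨x₀, hx₀⟩
  · have : ν = 0 := by simp [ν, hΩe]
    rw [this]
    simp only [Measure.prod_zero]
    exact aestronglyMeasurable_zero_measure _
  haveI : Nonempty ↥Ω := ⟨⟨x₀, hx₀⟩⟩
  have hsec' : ∀ i : ↥Ω, AEStronglyMeasurable (fun y => r y (i : EuclideanSpace ℝ (Fin d))) ν :=
    fun i => hsec i i.2
  set g : ↥Ω → EuclideanSpace ℝ (Fin d) → ℝ := fun i => (hsec' i).mk _ with hg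
  have hgmeas : ∀ i, StronglyMeasurable (g i) := fun i => (hsec' i).stronglyMeasurable_mk
  have hgae : ∀ i : ↥Ω, (fun y => r y (i : EuclideanSpace ℝ (Fin d))) =ᵐ[ν] g i :=
    fun i => (hsec' i).ae_eq_mk
  have h_str_meas : StronglyMeasurable (id : ↥Ω → ↥Ω) := stronglyMeasurable_id
  set t : ℕ → SimpleFunc ↥Ω ↥Ω := h_str_meas.approx with ht
  have ht_tendsto : ∀ j : ↥Ω, Tendsto (fun n => t n j) atTop (𝓝 j) :=
    fun j => h_str_meas.tendsto_approx j
  set s : ℕ → EuclideanSpace ℝ (Fin d) → ↥Ω := fun n x =>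
    if h : x ∈ Ω then t n ⟨x, h⟩ else ⟨x₀, hx₀⟩ with hs
  have hsmeas : ∀ n, Measurable (s n) := by
    intro n
    exact Measurable.dite (f := fun x : ↥Ω => t n x) ((t n).measurable) measurable_const hΩm
  set Fn : ℕ → Finset ↥Ω := fun n => (t n).range ∪ {⟨x₀, hx₀⟩} with hFn
  have hsFn : ∀ n x, s n x ∈ Fn n := by
    intro n x
    by_cases h : x ∈ Ω
    · simp only [hs, dif_pos h, hFn, Finset.mem_union]
      exact Or.inl (SimpleFunc.mem_range_self _ _)
    · simp only [hs, dif_neg h, hFn, Finset.mem_union]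
      exact Or.inr (Finset.mem_singleton_self _)
  set G : ℕ → EuclideanSpace ℝ (Fin d) × EuclideanSpace ℝ (Fin d) → ℝ :=
    fun n p => ∑ j ∈ Fn n, if s n p.1 = j then g j p.2 else 0 with hG
  have hGval : ∀ n p, G n p = g (s n p.1) p.2 := by
    intro n p
    rw [hG]
    simp only
    rw [Finset.sum_ite_eq (Fn n) (s n p.1) (fun j => g j p.2), if_pos (hsFn n p.1)]
  have hGmeas : ∀ n, Measurable (G n) := by
    intro n
    refine Finset.measurable_sum _ (fun j _ => ?_)
    refine Measurable.ite ?_ ((hgmeas j).measurable.comp measurable_snd) measurable_const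
    exact (hsmeas n).comp measurable_fst (MeasurableSet.singleton j)
  set N : Set (EuclideanSpace ℝ (Fin d)) :=
    ⋃ n, ⋃ j ∈ Fn n, {y | g j y ≠ r y (j : EuclideanSpace ℝ (Fin d))} with hN
  have hNnull : ν N = 0 := by
    rw [hN]
    refine measure_iUnion_null fun n => ?_
    refine measure_biUnion_null_iff (Finset.countable_toSet _) |>.2 fun j _ => ?_
    have := hgae j
    rw [Filter.EventuallyEq] at this
    simpa [ae_iff, eq_comm] using this
  obtain ⟨N', hNN', hN'm, hN'null⟩ := exists_measurable_superset_of_null hNnull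
  refine aestronglyMeasurable_of_tendsto_ae atTop
    (fun n => (hGmeas n).aestronglyMeasurable) ?_
  have hae1 : ((volume.restrict Ω).prod ν) {p : EuclideanSpace ℝ (Fin d) ×
      EuclideanSpace ℝ (Fin d) | p.1 ∉ Ω} = 0 := by
    have : {p : EuclideanSpace ℝ (Fin d) × EuclideanSpace ℝ (Fin d) | p.1 ∉ Ω}
        = Ωᶜ ×ˢ Set.univ := by
      ext p; simp [Set.mem_prod]
    rw [this, Measure.prod_prod]
    simp [Measure.restrict_apply hΩm.compl]
  have hae2 : ((volume.restrict Ω).prod ν) {p : EuclideanSpace ℝ (Fin d) ×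
      EuclideanSpace ℝ (Fin d) | p.2 ∈ N'} = 0 := by
    have : {p : EuclideanSpace ℝ (Fin d) × EuclideanSpace ℝ (Fin d) | p.2 ∈ N'}
        = Set.univ ×ˢ N' := by
      ext p; simp [Set.mem_prod]
    rw [this, Measure.prod_prod, hN'null, mul_zero]
  have hmem1 : ∀ᵐ p ∂((volume.restrict Ω).prod ν), p.1 ∈ Ω := by
    rw [ae_iff]; exact hae1
  have hmem2 : ∀ᵐ p ∂((volume.restrict Ω).prod ν), p.2 ∉ N' := by
    rw [ae_iff]; simpa using hae2
  filter_upwards [hmem1, hmem2] with p hp1 hp2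
  have hgood : ∀ j ∈ ⋃ n, (Fn n : Set ↥Ω), g j p.2 = r p.2 (j : EuclideanSpace ℝ (Fin d)) := by
    intro j hj
    by_contra hne
    apply hp2
    apply hNN'
    rw [hN]
    simp only [Set.mem_iUnion]
    obtain ⟨n, hn⟩ := Set.mem_iUnion.1 hj
    exact ⟨n, j, by simpa using hn, hne⟩
  have hGp : ∀ n, G n p = r p.2 ((t n ⟨p.1, hp1⟩ : ↥Ω) : EuclideanSpace ℝ (Fin d)) := by
    intro n
    rw [hGval]
    have hs1 : s n p.1 = t n ⟨p.1, hp1⟩ := by rw [hs]; simp [hp1]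
    rw [hs1]
    refine hgood _ (Set.mem_iUnion.2 ⟨n, ?_⟩)
    have : t n ⟨p.1, hp1⟩ ∈ Fn n := by
      rw [hFn]; exact Finset.mem_union_left _ (SimpleFunc.mem_range_self (t n) ⟨p.1, hp1⟩)
    exact_mod_cast this
  have : Tendsto (fun n => r p.2 ((t n ⟨p.1, hp1⟩ : ↥Ω) : EuclideanSpace ℝ (Fin d))) atTop
      (𝓝 (r p.2 p.1)) := by
    have hc : Continuous fun i : ↥Ω => r p.2 (i : EuclideanSpace ℝ (Fin d)) :=
      (hcont p.2).comp continuous_subtype_val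
    have := (hc.tendsto ⟨p.1, hp1⟩).comp (ht_tendsto ⟨p.1, hp1⟩)
    exact this
  simpa only [hGp] using this

lemma aux_fst {α β : Type*} [MeasurableSpace α] [MeasurableSpace β]
    {ν₁ : Measure α} (ν₂ : Measure β) [SFinite ν₂] {f : α → ℝ}
    (hf : AEStronglyMeasurable f ν₁) :
    AEStronglyMeasurable (fun z : α × β => f z.1) (ν₁.prod ν₂) := by
  refine ⟨fun z => hf.mk f z.1, hf.stronglyMeasurable_mk.comp_measurable measurable_fst, ?_⟩
  have hnull : ν₁ {x | f x ≠ hf.mk f x} = 0 := by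
    have := hf.ae_eq_mk
    rw [Filter.EventuallyEq, ae_iff] at this
    simpa using this
  obtain ⟨S, hS, hSm, hS0⟩ := exists_measurable_superset_of_null hnull
  rw [Filter.EventuallyEq, ae_iff]
  refine measure_mono_null (fun z hz => ?_) (?_ : (ν₁.prod ν₂) (S ×ˢ Set.univ) = 0)
  · exact ⟨hS hz, Set.mem_univ _⟩
  · rw [Measure.prod_prod, hS0, zero_mul]

lemma aux_snd {α β : Type*} [MeasurableSpace α] [MeasurableSpace β]
    (ν₁ : Measure α) {ν₂ : Measure β} [SFinite ν₂] {f : β → ℝ}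
    (hf : AEStronglyMeasurable f ν₂) :
    AEStronglyMeasurable (fun z : α × β => f z.2) (ν₁.prod ν₂) := by
  refine ⟨fun z => hf.mk f z.2, hf.stronglyMeasurable_mk.comp_measurable measurable_snd, ?_⟩
  have hnull : ν₂ {x | f x ≠ hf.mk f x} = 0 := by
    have := hf.ae_eq_mk
    rw [Filter.EventuallyEq, ae_iff] at this
    simpa using this
  obtain ⟨S, hS, hSm, hS0⟩ := exists_measurable_superset_of_null hnull
  rw [Filter.EventuallyEq, ae_iff]
  refine measure_mono_null (fun z hz => ?_) (?_ : (ν₁.prod ν₂) (Set.univ ×ˢ S) = 0)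
  · exact ⟨Set.mem_univ _, hS hz⟩
  · rw [Measure.prod_prod, hS0, mul_zero]

lemma aux_two_add {pt : ℝ} (hpt : 0 ≤ pt) (x y : ℝ≥0∞) :
    (2 * x + 2 * y) ^ pt ≤ 4 ^ pt * (x ^ pt + y ^ pt) := by
  have h1 : 2 * x + 2 * y ≤ 4 * max x y := by
    rcases le_total x y with h | h
    · calc 2 * x + 2 * y ≤ 2 * y + 2 * y := by gcongr
      _ = 4 * y := by ring
      _ ≤ 4 * max x y := by gcongr; exact le_max_right _ _
    · calc 2 * x + 2 * y ≤ 2 * x + 2 * x := by gcongr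
      _ = 4 * x := by ring
      _ ≤ 4 * max x y := by gcongr; exact le_max_left _ _
  calc (2 * x + 2 * y) ^ pt ≤ (4 * max x y) ^ pt := ENNReal.rpow_le_rpow h1 hpt
  _ = 4 ^ pt * (max x y) ^ pt := ENNReal.mul_rpow_of_nonneg _ _ hpt
  _ ≤ 4 ^ pt * (x ^ pt + y ^ pt) := by
      refine mul_le_mul_right ?_ _
      rcases le_total x y with h | h
      · rw [max_eq_right h]; exact le_add_self
      · rw [max_eq_left h]; exact le_self_add

lemma aux_holder_step (B T : ℝ≥0∞) (hB0 : B ≠ 0) (hBtop : B ≠ ⊤) {pt q : ℝ}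
    (hpq : pt.HolderConjugate q) :
    (B⁻¹ * (B ^ (1 / q) * T ^ (1 / pt))) ^ pt = B⁻¹ * T := by
  have hpt : 0 < pt := hpq.pos
  have hq : 0 < q := hpq.symm.pos
  have hBpos : 0 < B := pos_iff_ne_zero.2 hB0
  have hX0 : B ^ (1 / q * pt) ≠ 0 := (ENNReal.rpow_pos hBpos hBtop).ne'
  have hXtop : B ^ (1 / q * pt) ≠ ⊤ :=
    ENNReal.rpow_ne_top_of_nonneg (by positivity) hBtop
  have hsum : 1 / q * pt + 1 = pt := by
    have h := hpq.inv_add_inv_eq_one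
    have hq' : 1 / q = 1 - 1 / pt := by
      rw [one_div, one_div]; linarith
    rw [hq', sub_mul, one_mul, one_div, inv_mul_cancel₀ hpt.ne']
    ring
  have hBpt : B ^ pt = B ^ (1 / q * pt) * B := by
    conv_lhs => rw [← hsum]
    rw [ENNReal.rpow_add _ _ hB0 hBtop, ENNReal.rpow_one]
  calc (B⁻¹ * (B ^ (1 / q) * T ^ (1 / pt))) ^ pt
      = (B⁻¹) ^ pt * ((B ^ (1 / q)) ^ pt * (T ^ (1 / pt)) ^ pt) := by
        rw [ENNReal.mul_rpow_of_nonneg _ _ hpt.le, ENNReal.mul_rpow_of_nonneg _ _ hpt.le]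
  _ = (B ^ pt)⁻¹ * (B ^ (1 / q * pt) * T) := by
        rw [ENNReal.inv_rpow, ← ENNReal.rpow_mul, ← ENNReal.rpow_mul,
          one_div_mul_cancel hpt.ne', ENNReal.rpow_one]
  _ = B⁻¹ * T := by
        rw [hBpt, ENNReal.mul_inv (Or.inl hX0) (Or.inl hXtop)]
        have hXX : (B ^ (1 / q * pt))⁻¹ * B ^ (1 / q * pt) = 1 :=
          ENNReal.inv_mul_cancel hX0 hXtop
        calc (B ^ (1 / q * pt))⁻¹ * B⁻¹ * (B ^ (1 / q * pt) * T)
            = ((B ^ (1 / q * pt))⁻¹ * B ^ (1 / q * pt)) * (B⁻¹ * T) := by ring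
        _ = B⁻¹ * T := by rw [hXX, one_mul]

end AuxLemmas

/-- `L^p` boundedness of the normalized nonlocal operator: for every `p ∈ [1,∞]` and
`u ∈ L^p(Ω)`, the function `x ↦ Φ_{δ,2}(x)⁻¹ · 2∫_Ω ρ_{δ,2}(x,y)(u(x)−u(y)) dy`
belongs to `L^p(Ω)` with norm at most `C‖u‖_{L^p(Ω)}`. -/
theorem normalized_operator_Lp_bound {d : ℕ} (hd : 1 ≤ d)
    (Ω : Set (EuclideanSpace ℝ (Fin d))) (hΩb : Bornology.IsBounded Ω)
    (hΩm : MeasurableSet Ω)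
    (ρ : ℝ → ℝ) (hρc : Continuous ρ) (hρnn : ∀ r : ℝ, 0 ≤ ρ r)
    (R₀ : ℝ) (hR₀ : R₀ ∈ Set.Ioo (0 : ℝ) 1) (hsupp : ∀ r : ℝ, R₀ ≤ r → ρ r = 0)
    (δ : ℝ) (hδ : δ ∈ Set.Ioo (0 : ℝ) 1)
    (η : EuclideanSpace ℝ (Fin d) → ℝ) (hηpos : ∀ x ∈ Ω, 0 < η x)
    (ρδ2 : EuclideanSpace ℝ (Fin d) → EuclideanSpace ℝ (Fin d) → ℝ)
    (hρδ2 : ∀ x y, ρδ2 x y =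
      (1 / 2) * (η x ^ (-((d : ℝ) + 2)) * ρ (dist y x / η x) +
                 η y ^ (-((d : ℝ) + 2)) * ρ (dist y x / η y)))
    (Φ : EuclideanSpace ℝ (Fin d) → ℝ)
    (hΦ : ∀ x, Φ x = ∫ y in Ω, ρδ2 x y)
    (μ₁ μ₂ : ℝ) (hμ₁ : 0 < μ₁)
    (hΦbound : ∀ x ∈ Ω, μ₁ ≤ η x ^ 2 * Φ x ∧ η x ^ 2 * Φ x ≤ μ₂)
    (c : ℝ) (hc : 0 < c) (hcδ : c * Real.sqrt δ < 1)
    (hcomp : ∀ x ∈ Ω, ∀ y ∈ Ω, dist x y ≤ R₀ * max (η x) (η y) →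
      (1 - c * Real.sqrt δ) * η x ≤ η y ∧ η y ≤ (1 + c * Real.sqrt δ) * η x) :
    ∀ p : ℝ≥0∞, 1 ≤ p → ∃ C : ℝ, 0 < C ∧
      ∀ u : EuclideanSpace ℝ (Fin d) → ℝ, MemLp u p (volume.restrict Ω) →
        MemLp (fun x => (Φ x)⁻¹ * (2 * ∫ y in Ω, ρδ2 x y * (u x - u y))) p
            (volume.restrict Ω) ∧
          eLpNorm (fun x => (Φ x)⁻¹ * (2 * ∫ y in Ω, ρδ2 x y * (u x - u y))) p
              (volume.restrict Ω) ≤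
            ENNReal.ofReal C * eLpNorm u p (volume.restrict Ω) := by
  classical
  intro p hp
  have hp0 : p ≠ 0 := by
    intro h; rw [h] at hp; simp at hp
  rcases Set.eq_empty_or_nonempty Ω with hΩe | hΩne
  · refine ⟨1, one_pos, fun u hu => ?_⟩
    subst hΩe
    rw [Measure.restrict_empty]
    refine ⟨⟨aestronglyMeasurable_zero_measure _, ?_⟩, ?_⟩
    · simp [eLpNorm_measure_zero]
    · simp [eLpNorm_measure_zero]
  obtain ⟨x₀, hx₀⟩ := hΩne
  set ν : Measure (EuclideanSpace ℝ (Fin d)) := volume.restrict Ω with hν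
  set a : ℝ := c * Real.sqrt δ with ha
  have ha0 : 0 ≤ a := mul_nonneg hc.le (Real.sqrt_nonneg _)
  have hμ₂ : 0 < μ₂ := lt_of_lt_of_le hμ₁ (le_trans (hΦbound x₀ hx₀).1 (hΦbound x₀ hx₀).2)
  set C₀ : ℝ := (1 + a) ^ 2 * μ₂ / μ₁ with hC₀
  have hC₀pos : 0 < C₀ := div_pos (mul_pos (by nlinarith) hμ₂) hμ₁
  set C : ℝ := 4 * (1 + C₀) with hC
  have hCpos : 0 < C := by nlinarith
  refine ⟨C, hCpos, fun u hu => ?_⟩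
  -- kernel facts
  have hnn : ∀ x ∈ Ω, ∀ y ∈ Ω, 0 ≤ ρδ2 x y := by
    intro x hx y hy
    rw [hρδ2]
    have h1 : 0 < η x ^ (-((d : ℝ) + 2)) := Real.rpow_pos_of_pos (hηpos x hx) _
    have h2 : 0 < η y ^ (-((d : ℝ) + 2)) := Real.rpow_pos_of_pos (hηpos y hy) _
    have h3 := hρnn (dist y x / η x)
    have h4 := hρnn (dist y x / η y)
    have := mul_nonneg h1.le h3
    have := mul_nonneg h2.le h4
    linarith
  have hsymm : ∀ x y, ρδ2 x y = ρδ2 y x := by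
    intro x y; rw [hρδ2, hρδ2, dist_comm]; ring
  have hΦpos : ∀ x ∈ Ω, 0 < Φ x := by
    intro x hx
    have h := (hΦbound x hx).1
    have h2 : 0 < η x ^ 2 := pow_pos (hηpos x hx) 2
    nlinarith
  have hint : ∀ x ∈ Ω, Integrable (fun y => ρδ2 x y) ν := by
    intro x hx
    by_contra hcon
    have hpos := hΦpos x hx
    rw [hΦ x, integral_undef hcon] at hpos
    exact lt_irrefl 0 hpos
  -- the ENNReal-valued kernel and normalization
  set W : EuclideanSpace ℝ (Fin d) → EuclideanSpace ℝ (Fin d) → ℝ≥0∞ :=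
    fun x y => ENNReal.ofReal (ρδ2 x y) with hW
  set A : EuclideanSpace ℝ (Fin d) → ℝ≥0∞ := fun x => ENNReal.ofReal (Φ x) with hA
  have hA0 : ∀ x ∈ Ω, A x ≠ 0 := fun x hx => (ENNReal.ofReal_pos.2 (hΦpos x hx)).ne'
  have hAtop : ∀ x, A x ≠ ∞ := fun x => ENNReal.ofReal_ne_top
  have hWtop : ∀ x y, W x y ≠ ∞ := fun x y => ENNReal.ofReal_ne_top
  have hΦinv : ∀ x ∈ Ω, (A x)⁻¹ = ENNReal.ofReal (Φ x)⁻¹ := fun x hx =>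
    (ENNReal.ofReal_inv_of_pos (hΦpos x hx)).symm
  have hWint : ∀ x ∈ Ω, ∫⁻ y, W x y ∂ν = A x := by
    intro x hx
    rw [hA]
    simp only
    rw [hΦ x]
    refine (MeasureTheory.ofReal_integral_eq_lintegral_ofReal (hint x hx) ?_).symm
    filter_upwards [ae_restrict_mem hΩm] with y hy using hnn x hx y hy
  -- support and comparability
  have hcompx : ∀ x ∈ Ω, ∀ y ∈ Ω, ρδ2 x y ≠ 0 → η x ≤ (1 + a) * η y := by
    intro x hx y hy hne
    have hdist : dist x y ≤ R₀ * max (η x) (η y) := by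
      by_contra hgt
      push_neg at hgt
      apply hne
      rw [hρδ2]
      have hx' : R₀ ≤ dist y x / η x := by
        rw [le_div_iff₀ (hηpos x hx), dist_comm]
        calc R₀ * η x ≤ R₀ * max (η x) (η y) :=
          mul_le_mul_of_nonneg_left (le_max_left _ _) hR₀.1.le
        _ ≤ dist x y := hgt.le
      have hy' : R₀ ≤ dist y x / η y := by
        rw [le_div_iff₀ (hηpos y hy), dist_comm]
        calc R₀ * η y ≤ R₀ * max (η x) (η y) :=
          mul_le_mul_of_nonneg_left (le_max_right _ _) hR₀.1.le
        _ ≤ dist x y := hgt.le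
      rw [hsupp _ hx', hsupp _ hy', mul_zero, mul_zero, add_zero, mul_zero]
    exact (hcomp y hy x hx (by rwa [dist_comm, max_comm])).2
  -- joint measurability
  set r : EuclideanSpace ℝ (Fin d) → EuclideanSpace ℝ (Fin d) → ℝ :=
    fun w z => η w ^ (-((d : ℝ) + 2)) * ρ (dist w z / η w) with hr
  have hrcont : ∀ w, Continuous (r w) := by
    intro w
    exact continuous_const.mul
      (hρc.comp ((continuous_const.dist continuous_id).div_const _))
  have hsec : ∀ x ∈ Ω, AEStronglyMeasurable (fun y => r y x) ν := by
    intro x hx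
    have h1 : AEStronglyMeasurable (fun y => ρδ2 x y) ν := (hint x hx).aestronglyMeasurable
    have heq : (fun y => r y x) = fun y => 2 * ρδ2 x y - r x y := by
      funext y
      simp only [hr]
      rw [hρδ2, dist_comm y x]
      ring
    rw [heq]
    exact (h1.const_mul 2).sub (hrcont x).aestronglyMeasurable
  have hjrm : AEStronglyMeasurable
      (fun z : EuclideanSpace ℝ (Fin d) × EuclideanSpace ℝ (Fin d) => r z.2 z.1) (ν.prod ν) := by
    exact aux_jointAESM Ω hΩm r hrcont hsec
  have hjoint : AEStronglyMeasurable
      (fun z : EuclideanSpace ℝ (Fin d) × EuclideanSpace ℝ (Fin d) => ρδ2 z.1 z.2)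
      (ν.prod ν) := by
    have hswap : AEStronglyMeasurable
        (fun z : EuclideanSpace ℝ (Fin d) × EuclideanSpace ℝ (Fin d) => r z.1 z.2)
        (ν.prod ν) := hjrm.prod_swap
    have heq : (fun z : EuclideanSpace ℝ (Fin d) × EuclideanSpace ℝ (Fin d) => ρδ2 z.1 z.2) =
        fun z => (1 / 2 : ℝ) * (r z.1 z.2 + r z.2 z.1) := by
      funext z
      simp only [hr]
      rw [hρδ2, dist_comm z.1 z.2]
    rw [heq]
    exact (hswap.add hjrm).const_mul _
  have hWjoint : AEMeasurable
      (fun z : EuclideanSpace ℝ (Fin d) × EuclideanSpace ℝ (Fin d) => W z.1 z.2) (ν.prod ν) :=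
    hjoint.aemeasurable.ennreal_ofReal
  have hWsec : ∀ᵐ x ∂ν, AEMeasurable (fun y => W x y) ν := by
    filter_upwards [hjoint.prodMk_left] with x hx using hx.aemeasurable.ennreal_ofReal
  have hΦmeas : AEStronglyMeasurable Φ ν := by
    have h := hjoint.integral_prod_right'
    have heq : Φ = fun x => ∫ y, ρδ2 x y ∂ν := by funext x; exact hΦ x
    rw [heq]
    exact h
  -- the row bound
  have hrow : ∀ y ∈ Ω, ∫⁻ x, (A x)⁻¹ * W x y ∂ν ≤ ENNReal.ofReal C₀ := by
    intro y hy
    have hptw : ∀ᵐ x ∂ν, (A x)⁻¹ * W x y ≤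
        ENNReal.ofReal ((1 + a) ^ 2 * η y ^ 2 / μ₁) * W y x := by
      filter_upwards [ae_restrict_mem hΩm] with x hx
      by_cases hz : ρδ2 x y = 0
      · simp [hW, hz]
      · have hd := hcompx x hx y hy hz
        rw [hΦinv x hx, hW]
        simp only
        rw [← ENNReal.ofReal_mul (inv_nonneg.2 (hΦpos x hx).le),
          ← ENNReal.ofReal_mul (by positivity)]
        apply ENNReal.ofReal_le_ofReal
        rw [← hsymm x y]
        apply mul_le_mul_of_nonneg_right ?_ (hnn x hx y hy)
        have hinvle : (Φ x)⁻¹ ≤ η x ^ 2 / μ₁ := by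
          rw [le_div_iff₀ hμ₁]
          have h1 := (hΦbound x hx).1
          have h2 := hΦpos x hx
          have h3 : (Φ x)⁻¹ * μ₁ ≤ (Φ x)⁻¹ * (η x ^ 2 * Φ x) :=
            mul_le_mul_of_nonneg_left h1 (inv_nonneg.2 h2.le)
          have h4 : (Φ x)⁻¹ * (η x ^ 2 * Φ x) = η x ^ 2 := by field_simp
          linarith
        calc (Φ x)⁻¹ ≤ η x ^ 2 / μ₁ := hinvle
        _ ≤ (1 + a) ^ 2 * η y ^ 2 / μ₁ := by
            exact (div_le_div_iff_of_pos_right hμ₁).mpr (by nlinarith [hηpos x hx, hηpos y hy])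
    calc ∫⁻ x, (A x)⁻¹ * W x y ∂ν
        ≤ ∫⁻ x, ENNReal.ofReal ((1 + a) ^ 2 * η y ^ 2 / μ₁) * W y x ∂ν :=
          lintegral_mono_ae hptw
    _ = ENNReal.ofReal ((1 + a) ^ 2 * η y ^ 2 / μ₁) * A y := by
        rw [lintegral_const_mul' _ _ ENNReal.ofReal_ne_top, hWint y hy]
    _ ≤ ENNReal.ofReal C₀ := by
        rw [hA]
        simp only
        rw [← ENNReal.ofReal_mul (by positivity)]
        apply ENNReal.ofReal_le_ofReal
        have h2 := (hΦbound y hy).2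
        rw [hC₀]
        have h4 : (1 + a) ^ 2 * η y ^ 2 / μ₁ * Φ y = (1 + a) ^ 2 / μ₁ * (η y ^ 2 * Φ y) := by
          ring
        have h5 : (1 + a) ^ 2 * μ₂ / μ₁ = (1 + a) ^ 2 / μ₁ * μ₂ := by ring
        rw [h4, h5]
        exact mul_le_mul_of_nonneg_left h2 (div_nonneg (by positivity) hμ₁.le)
  -- measurability of the operator
  have hUm : AEStronglyMeasurable u ν := hu.aestronglyMeasurable
  set U : EuclideanSpace ℝ (Fin d) → ℝ≥0∞ := fun x => (‖u x‖₊ : ℝ≥0∞) with hU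
  have hUmeas : AEMeasurable U ν := hUm.enorm
  have hUtop : ∀ x, U x ≠ ∞ := fun x => ENNReal.coe_ne_top
  have hTum : AEStronglyMeasurable
      (fun x => (Φ x)⁻¹ * (2 * ∫ y in Ω, ρδ2 x y * (u x - u y))) ν := by
    have hprodm : AEStronglyMeasurable
        (fun z : EuclideanSpace ℝ (Fin d) × EuclideanSpace ℝ (Fin d) =>
          ρδ2 z.1 z.2 * (u z.1 - u z.2)) (ν.prod ν) :=
      hjoint.mul ((aux_fst ν hUm).sub (aux_snd ν hUm))
    have hIm : AEStronglyMeasurable (fun x => ∫ y, ρδ2 x y * (u x - u y) ∂ν) ν :=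
      hprodm.integral_prod_right'
    exact ((hΦmeas.aemeasurable.inv).mul (hIm.aemeasurable.const_mul 2)).aestronglyMeasurable
  -- pointwise bound
  have hptwTu : ∀ᵐ x ∂ν,
      (‖(Φ x)⁻¹ * (2 * ∫ y in Ω, ρδ2 x y * (u x - u y))‖₊ : ℝ≥0∞) ≤
        2 * U x + 2 * ((A x)⁻¹ * ∫⁻ y, W x y * U y ∂ν) := by
    filter_upwards [ae_restrict_mem hΩm, hWsec] with x hx hWx
    have hIbound : (‖∫ y, ρδ2 x y * (u x - u y) ∂ν‖₊ : ℝ≥0∞) ≤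
        U x * A x + ∫⁻ y, W x y * U y ∂ν := by
      refine le_trans (enorm_integral_le_lintegral_enorm _) ?_
      have hmono : ∫⁻ y, (‖ρδ2 x y * (u x - u y)‖₊ : ℝ≥0∞) ∂ν ≤
          ∫⁻ y, (W x y * U x + W x y * U y) ∂ν := by
        refine lintegral_mono_ae ?_
        filter_upwards [ae_restrict_mem hΩm] with y hy
        have h1 : (‖ρδ2 x y * (u x - u y)‖₊ : ℝ≥0∞) = W x y * (‖u x - u y‖₊ : ℝ≥0∞) := by
          rw [nnnorm_mul, ENNReal.coe_mul, ← enorm_eq_nnnorm (ρδ2 x y), Real.enorm_eq_ofReal (hnn x hx y hy)]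
        rw [h1, ← mul_add]
        refine mul_le_mul_right ?_ _
        simp only [hU]
        exact le_trans (ENNReal.coe_le_coe.2 (nnnorm_sub_le _ _))
          (le_of_eq (ENNReal.coe_add _ _))
      refine le_trans hmono ?_
      rw [lintegral_add_left' (hWx.mul_const _) _]
      have h2 : ∫⁻ y, W x y * U x ∂ν = U x * A x := by
        rw [lintegral_mul_const' (U x) _ (hUtop x), hWint x hx, mul_comm]
      rw [h2]
    have h3 : (‖(Φ x)⁻¹ * (2 * ∫ y in Ω, ρδ2 x y * (u x - u y))‖₊ : ℝ≥0∞) =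
        (A x)⁻¹ * (2 * (‖∫ y, ρδ2 x y * (u x - u y) ∂ν‖₊ : ℝ≥0∞)) := by
      rw [nnnorm_mul, nnnorm_mul, ENNReal.coe_mul, ENNReal.coe_mul]
      congr 1
      · rw [← enorm_eq_nnnorm ((Φ x)⁻¹), Real.enorm_eq_ofReal (inv_nonneg.2 (hΦpos x hx).le)]
        exact (hΦinv x hx).symm
      · congr 1
        simp
    rw [h3]
    calc (A x)⁻¹ * (2 * (‖∫ y, ρδ2 x y * (u x - u y) ∂ν‖₊ : ℝ≥0∞))
        ≤ (A x)⁻¹ * (2 * (U x * A x + ∫⁻ y, W x y * U y ∂ν)) := by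
          exact mul_le_mul_right (mul_le_mul_right hIbound _) _
    _ = 2 * U x * ((A x)⁻¹ * A x) + 2 * ((A x)⁻¹ * ∫⁻ y, W x y * U y ∂ν) := by ring
    _ = 2 * U x + 2 * ((A x)⁻¹ * ∫⁻ y, W x y * U y ∂ν) := by
        rw [ENNReal.inv_mul_cancel (hA0 x hx) (hAtop x), mul_one]
  -- now split on p
  by_cases hptop : p = ∞
  · -- p = ∞
    subst hptop
    have hMtop : eLpNormEssSup u ν ≠ ∞ := by
      have := hu.2
      rwa [eLpNorm_exponent_top, lt_top_iff_ne_top] at this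
    have hUle : ∀ᵐ y ∂ν, U y ≤ eLpNormEssSup u ν := by
      unfold eLpNormEssSup
      rw [hU]
      exact ENNReal.ae_le_essSup _
    have hbd : ∀ᵐ x ∂ν,
        (‖(Φ x)⁻¹ * (2 * ∫ y in Ω, ρδ2 x y * (u x - u y))‖₊ : ℝ≥0∞) ≤
          4 * eLpNormEssSup u ν := by
      filter_upwards [hptwTu, ae_restrict_mem hΩm, hUle] with x hx1 hx2 hx3
      have hV : (A x)⁻¹ * ∫⁻ y, W x y * U y ∂ν ≤ eLpNormEssSup u ν := by
        calc (A x)⁻¹ * ∫⁻ y, W x y * U y ∂ν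
            ≤ (A x)⁻¹ * ∫⁻ y, W x y * eLpNormEssSup u ν ∂ν := by
              refine mul_le_mul_right (lintegral_mono_ae ?_) _
              filter_upwards [hUle] with y hy using mul_le_mul_right hy _
        _ = (A x)⁻¹ * (A x * eLpNormEssSup u ν) := by
              rw [lintegral_mul_const' _ _ hMtop, hWint x hx2]
        _ = ((A x)⁻¹ * A x) * eLpNormEssSup u ν := by ring
        _ = eLpNormEssSup u ν := by
              rw [ENNReal.inv_mul_cancel (hA0 x hx2) (hAtop x), one_mul]
      calc (‖(Φ x)⁻¹ * (2 * ∫ y in Ω, ρδ2 x y * (u x - u y))‖₊ : ℝ≥0∞)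
          ≤ 2 * U x + 2 * ((A x)⁻¹ * ∫⁻ y, W x y * U y ∂ν) := hx1
      _ ≤ 2 * eLpNormEssSup u ν + 2 * eLpNormEssSup u ν := by
          exact add_le_add (mul_le_mul_right hx3 _) (mul_le_mul_right hV _)
      _ = 4 * eLpNormEssSup u ν := by ring
    have hsn : eLpNorm (fun x => (Φ x)⁻¹ * (2 * ∫ y in Ω, ρδ2 x y * (u x - u y))) ∞ ν ≤
        4 * eLpNormEssSup u ν := by
      rw [eLpNorm_exponent_top]
      exact essSup_le_of_ae_le _ hbd
    have h4C : (4 : ℝ≥0∞) ≤ ENNReal.ofReal C := by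
      have : ((4 : ℝ≥0∞)) = ENNReal.ofReal (4 : ℝ) := by
        rw [ENNReal.ofReal_ofNat]
      rw [this]
      exact ENNReal.ofReal_le_ofReal (by nlinarith)
    have hfin : eLpNorm (fun x => (Φ x)⁻¹ * (2 * ∫ y in Ω, ρδ2 x y * (u x - u y))) ∞ ν ≤
        ENNReal.ofReal C * eLpNorm u ∞ ν := by
      refine le_trans hsn ?_
      rw [eLpNorm_exponent_top]
      exact mul_le_mul_left h4C _
    refine ⟨⟨hTum, lt_of_le_of_lt hfin ?_⟩, hfin⟩
    exact ENNReal.mul_lt_top ENNReal.ofReal_lt_top hu.2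
  · -- 1 ≤ p < ∞
    have hpt : 0 < p.toReal := ENNReal.toReal_pos hp0 hptop
    have hpt1 : 1 ≤ p.toReal := by
      have := ENNReal.toReal_mono hptop hp
      simpa using this
    -- Claim A : pointwise Hölder/Jensen bound
    have hVpt : ∀ᵐ x ∂ν, ((A x)⁻¹ * ∫⁻ y, W x y * U y ∂ν) ^ p.toReal ≤
        (A x)⁻¹ * ∫⁻ y, W x y * U y ^ p.toReal ∂ν := by
      rcases eq_or_lt_of_le hpt1 with hpteq | hptgt
      · refine Eventually.of_forall fun x => ?_
        rw [← hpteq]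
        simp only [ENNReal.rpow_one]
        exact le_rfl
      · have hpq : p.toReal.HolderConjugate (Real.conjExponent p.toReal) :=
          Real.HolderConjugate.conjExponent hptgt
        set q := Real.conjExponent p.toReal with hqdef
        filter_upwards [ae_restrict_mem hΩm, hWsec] with x hx hWx
        have hT : ∫⁻ y, W x y * U y ∂ν ≤
            (A x) ^ (1 / q) * (∫⁻ y, W x y * U y ^ p.toReal ∂ν) ^ (1 / p.toReal) := by
          have hHold := ENNReal.lintegral_mul_le_Lp_mul_Lq ν hpq.symm (g := fun y => W x y ^ (1 / p.toReal) * U y)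
            (hWx.pow_const (1 / q)) ((hWx.pow_const (1 / p.toReal)).mul hUmeas)
          have h1 : ∀ w : ℝ≥0∞, w ≠ ∞ → (w ^ (1 / q)) ^ q = w := fun w hw => by
            rw [← ENNReal.rpow_mul, one_div_mul_cancel hpq.symm.ne_zero, ENNReal.rpow_one]
          have h2 : ∀ w v : ℝ≥0∞, (w ^ (1 / p.toReal) * v) ^ p.toReal =
              w * v ^ p.toReal := fun w v => by
            rw [ENNReal.mul_rpow_of_nonneg _ _ hpt.le, ← ENNReal.rpow_mul,
              one_div_mul_cancel hpq.ne_zero, ENNReal.rpow_one]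
          have heq1 : ∫⁻ y, ((fun y => W x y ^ (1 / q)) * fun y => W x y ^ (1 / p.toReal) * U y) y ∂ν
              = ∫⁻ y, W x y * U y ∂ν := by
            refine lintegral_congr fun y => ?_
            simp only [Pi.mul_apply]
            by_cases h0 : W x y = 0
            · rw [h0, ENNReal.zero_rpow_of_pos (one_div_pos.2 hpq.symm.pos),
                ENNReal.zero_rpow_of_pos (one_div_pos.2 hpq.pos)]
              simp
            · rw [← mul_assoc]
              congr 1
              rw [← ENNReal.rpow_add _ _ h0 (hWtop x y)]
              rw [show 1 / q + 1 / p.toReal = 1 by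
                rw [one_div, one_div, add_comm]
                exact hpq.inv_add_inv_eq_one]
              exact ENNReal.rpow_one _
          have heq2 : ∫⁻ y, ((fun y => W x y ^ (1 / q)) y) ^ q ∂ν = A x := by
            rw [← hWint x hx]
            refine lintegral_congr fun y => ?_
            exact h1 _ (hWtop x y)
          have heq3 : ∫⁻ y, ((fun y => W x y ^ (1 / p.toReal) * U y) y) ^ p.toReal ∂ν =
              ∫⁻ y, W x y * U y ^ p.toReal ∂ν := by
            refine lintegral_congr fun y => ?_
            exact h2 _ _
          rw [heq1, heq2, heq3] at hHold
          exact hHold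
        calc ((A x)⁻¹ * ∫⁻ y, W x y * U y ∂ν) ^ p.toReal
            ≤ ((A x)⁻¹ * ((A x) ^ (1 / q) *
                (∫⁻ y, W x y * U y ^ p.toReal ∂ν) ^ (1 / p.toReal))) ^ p.toReal :=
              ENNReal.rpow_le_rpow (mul_le_mul_right hT _) hpt.le
        _ = (A x)⁻¹ * ∫⁻ y, W x y * U y ^ p.toReal ∂ν :=
              aux_holder_step (A x) _ (hA0 x hx) (hAtop x) hpq
    -- integrate claim A and swap
    have hVint : ∫⁻ x, ((A x)⁻¹ * ∫⁻ y, W x y * U y ∂ν) ^ p.toReal ∂ν ≤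
        ENNReal.ofReal C₀ * ∫⁻ y, U y ^ p.toReal ∂ν := by
      have hAfst : AEMeasurable
          (fun z : EuclideanSpace ℝ (Fin d) × EuclideanSpace ℝ (Fin d) => (A z.1)⁻¹)
          (ν.prod ν) := by
        have h := (aux_fst ν hΦmeas).aemeasurable.ennreal_ofReal
        exact h.inv
      have hUsnd : AEMeasurable
          (fun z : EuclideanSpace ℝ (Fin d) × EuclideanSpace ℝ (Fin d) => U z.2)
          (ν.prod ν) := (aux_snd ν hUm).enorm
      calc ∫⁻ x, ((A x)⁻¹ * ∫⁻ y, W x y * U y ∂ν) ^ p.toReal ∂ν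
          ≤ ∫⁻ x, (A x)⁻¹ * ∫⁻ y, W x y * U y ^ p.toReal ∂ν ∂ν := lintegral_mono_ae hVpt
      _ = ∫⁻ x, ∫⁻ y, (A x)⁻¹ * (W x y * U y ^ p.toReal) ∂ν ∂ν := by
          refine lintegral_congr_ae ?_
          filter_upwards [ae_restrict_mem hΩm] with x hx
          rw [lintegral_const_mul' _ _ (ENNReal.inv_ne_top.2 (hA0 x hx))]
      _ = ∫⁻ y, ∫⁻ x, (A x)⁻¹ * (W x y * U y ^ p.toReal) ∂ν ∂ν := by
          refine lintegral_lintegral_swap ?_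
          exact hAfst.mul (hWjoint.mul (hUsnd.pow_const _))
      _ = ∫⁻ y, (∫⁻ x, (A x)⁻¹ * W x y ∂ν) * U y ^ p.toReal ∂ν := by
          refine lintegral_congr fun y => ?_
          rw [← lintegral_mul_const' (U y ^ p.toReal) _
            (ENNReal.rpow_ne_top_of_nonneg hpt.le (hUtop y))]
          exact lintegral_congr fun x => by ring
      _ ≤ ∫⁻ y, ENNReal.ofReal C₀ * U y ^ p.toReal ∂ν := by
          refine lintegral_mono_ae ?_
          filter_upwards [ae_restrict_mem hΩm] with y hy
          exact mul_le_mul_left (hrow y hy) _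
      _ = ENNReal.ofReal C₀ * ∫⁻ y, U y ^ p.toReal ∂ν :=
          lintegral_const_mul' _ _ ENNReal.ofReal_ne_top
    have hCeq : ENNReal.ofReal C = 4 * (1 + ENNReal.ofReal C₀) := by
      rw [hC, ENNReal.ofReal_mul (by norm_num), ENNReal.ofReal_add one_pos.le hC₀pos.le]
      norm_num
    have hmain : ∫⁻ x, (‖(Φ x)⁻¹ * (2 * ∫ y in Ω, ρδ2 x y * (u x - u y))‖₊ : ℝ≥0∞) ^ p.toReal ∂ν
        ≤ (ENNReal.ofReal C) ^ p.toReal * ∫⁻ x, U x ^ p.toReal ∂ν := by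
      calc ∫⁻ x, (‖(Φ x)⁻¹ * (2 * ∫ y in Ω, ρδ2 x y * (u x - u y))‖₊ : ℝ≥0∞) ^ p.toReal ∂ν
          ≤ ∫⁻ x, 4 ^ p.toReal *
              (U x ^ p.toReal + ((A x)⁻¹ * ∫⁻ y, W x y * U y ∂ν) ^ p.toReal) ∂ν := by
            refine lintegral_mono_ae ?_
            filter_upwards [hptwTu] with x hx
            exact le_trans (ENNReal.rpow_le_rpow hx hpt.le) (aux_two_add hpt.le _ _)
      _ = 4 ^ p.toReal * (∫⁻ x, U x ^ p.toReal ∂ν +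
            ∫⁻ x, ((A x)⁻¹ * ∫⁻ y, W x y * U y ∂ν) ^ p.toReal ∂ν) := by
            rw [lintegral_const_mul' _ _
              (ENNReal.rpow_ne_top_of_nonneg hpt.le (by norm_num)),
              lintegral_add_left' (hUmeas.pow_const _)]
      _ ≤ 4 ^ p.toReal * (∫⁻ x, U x ^ p.toReal ∂ν +
            ENNReal.ofReal C₀ * ∫⁻ x, U x ^ p.toReal ∂ν) := by
            exact mul_le_mul_right (add_le_add_right hVint _) _
      _ = 4 ^ p.toReal * (1 + ENNReal.ofReal C₀) * ∫⁻ x, U x ^ p.toReal ∂ν := by ring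
      _ ≤ (ENNReal.ofReal C) ^ p.toReal * ∫⁻ x, U x ^ p.toReal ∂ν := by
            refine mul_le_mul_left ?_ _
            rw [hCeq, ENNReal.mul_rpow_of_nonneg _ _ hpt.le]
            refine mul_le_mul_right ?_ _
            calc (1 + ENNReal.ofReal C₀) = (1 + ENNReal.ofReal C₀) ^ (1 : ℝ) :=
              (ENNReal.rpow_one _).symm
            _ ≤ (1 + ENNReal.ofReal C₀) ^ p.toReal :=
              ENNReal.rpow_le_rpow_of_exponent_le le_self_add hpt1
    have hsn : eLpNorm (fun x => (Φ x)⁻¹ * (2 * ∫ y in Ω, ρδ2 x y * (u x - u y))) p ν ≤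
        ENNReal.ofReal C * eLpNorm u p ν := by
      rw [eLpNorm_eq_lintegral_rpow_enorm_toReal hp0 hptop, eLpNorm_eq_lintegral_rpow_enorm_toReal hp0 hptop]
      calc (∫⁻ x, (‖(Φ x)⁻¹ * (2 * ∫ y in Ω, ρδ2 x y * (u x - u y))‖₊ : ℝ≥0∞) ^ p.toReal ∂ν)
            ^ (1 / p.toReal)
          ≤ ((ENNReal.ofReal C) ^ p.toReal * ∫⁻ x, U x ^ p.toReal ∂ν) ^ (1 / p.toReal) :=
            ENNReal.rpow_le_rpow hmain (by positivity)
      _ = ENNReal.ofReal C * (∫⁻ x, U x ^ p.toReal ∂ν) ^ (1 / p.toReal) := by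
          rw [ENNReal.mul_rpow_of_nonneg _ _ (by positivity), ← ENNReal.rpow_mul,
            mul_one_div_cancel hpt.ne', ENNReal.rpow_one]
      _ = ENNReal.ofReal C * (∫⁻ x, (‖u x‖₊ : ℝ≥0∞) ^ p.toReal ∂ν) ^ (1 / p.toReal) := by
          simp only [hU]
    exact ⟨⟨hTum, lt_of_le_of_lt hsn (ENNReal.mul_lt_top ENNReal.ofReal_lt_top hu.2)⟩, hsn⟩
end

section
/- Let Ω ⊂ ℝ^d be a bounded domain, R₀ ∈ (0,1), κ̄₀ > 0, δ ∈ (0,1) with κ̄₀ R₀ √δ < 1, and η_δ satisfying η_δ(z) ≤ κ̄₀ min{δ, dist(z,∂Ω)²}. Suppose φ ∈ L²(Ω) satisfies supp φ ⊂ {x ∈ Ω : dist(x,∂Ω) > √r} for some r > 0. Then K_{δ,α}φ vanishes on the set {x ∈ Ω : dist(x,∂Ω) ≤ ((1 − κ̄₀R₀√δ)/(1 + κ̄₀R₀√δ)) √r}; that is, supp K_{δ,α}φ ⊂ {x ∈ Ω : dist(x,∂Ω) > ((1 − κ̄₀R₀√δ)/(1 + κ̄₀R₀√δ)) √r}. 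-/
open MeasureTheory Metric

/-- Support localization of the boundary-localized convolution: if `φ` vanishes on the
boundary layer `{dist(·,∂Ω) ≤ √r}`, then `K_{δ,α}φ` vanishes on the thinner layer
`{dist(·,∂Ω) ≤ ((1−κ̄₀R₀√δ)/(1+κ̄₀R₀√δ))√r}`. -/
theorem convolution_support_localization {d : ℕ} (hd : 1 ≤ d)
    (Ω : Set (EuclideanSpace ℝ (Fin d))) (hΩb : Bornology.IsBounded Ω)
    (hΩm : MeasurableSet Ω)
    (δ R₀ κ : ℝ) (hδ : δ ∈ Set.Ioo (0 : ℝ) 1) (hR₀ : R₀ ∈ Set.Ioo (0 : ℝ) 1)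
    (hκ : 0 < κ) (hsmall : κ * R₀ * Real.sqrt δ < 1)
    (η : EuclideanSpace ℝ (Fin d) → ℝ)
    (hηnn : ∀ z ∈ Ω, 0 ≤ η z)
    (hη : ∀ z ∈ Ω, η z ≤ κ * min δ ((infDist z (frontier Ω)) ^ 2))
    (α : ℝ)
    (ρδα : EuclideanSpace ℝ (Fin d) → EuclideanSpace ℝ (Fin d) → ℝ)
    (hker : ∀ x y, R₀ * max (η x) (η y) < dist x y → ρδα x y = 0)
    (Φ : EuclideanSpace ℝ (Fin d) → ℝ)
    (φ : EuclideanSpace ℝ (Fin d) → ℝ)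
    (hφ : MemLp φ 2 (volume.restrict Ω))
    (r : ℝ) (hr : 0 < r)
    (hφsupp : ∀ y, infDist y (frontier Ω) ≤ Real.sqrt r → φ y = 0) :
    ∀ x ∈ Ω, infDist x (frontier Ω) ≤
        ((1 - κ * R₀ * Real.sqrt δ) / (1 + κ * R₀ * Real.sqrt δ)) * Real.sqrt r →
      (Φ x)⁻¹ * ∫ y in Ω, ρδα x y * φ y = 0 := by
  intro x hx hxd
  set s := κ * R₀ * Real.sqrt δ with hs
  have hδ0 : 0 < Real.sqrt δ := Real.sqrt_pos.mpr hδ.1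
  have hs0 : 0 < s := mul_pos (mul_pos hκ hR₀.1) hδ0
  have hrr : 0 ≤ Real.sqrt r := Real.sqrt_nonneg r
  -- key bound: for z ∈ Ω, R₀ * η z ≤ s * infDist z (frontier Ω)
  have key : ∀ z ∈ Ω, R₀ * η z ≤ s * infDist z (frontier Ω) := by
    intro z hz
    set dz := infDist z (frontier Ω) with hdz
    have hdz0 : 0 ≤ dz := infDist_nonneg
    have hmin : min δ (dz ^ 2) ≤ Real.sqrt δ * dz := by
      by_cases hc : dz ^ 2 ≤ δ
      · have hle : dz ≤ Real.sqrt δ := by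
          rw [show δ = Real.sqrt δ * Real.sqrt δ from (Real.mul_self_sqrt hδ.1.le).symm] at hc
          nlinarith
        calc min δ (dz ^ 2) ≤ dz ^ 2 := min_le_right _ _
          _ = dz * dz := sq dz
          _ ≤ Real.sqrt δ * dz := by nlinarith
      · push_neg at hc
        have hle : Real.sqrt δ ≤ dz := by
          have := Real.sqrt_le_sqrt hc.le
          rwa [Real.sqrt_sq hdz0] at this
        calc min δ (dz ^ 2) ≤ δ := min_le_left _ _
          _ = Real.sqrt δ * Real.sqrt δ := (Real.mul_self_sqrt hδ.1.le).symm
          _ ≤ Real.sqrt δ * dz := by nlinarith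
    have h1 : η z ≤ κ * (Real.sqrt δ * dz) := by
      calc η z ≤ κ * min δ (dz ^ 2) := hη z hz
        _ ≤ κ * (Real.sqrt δ * dz) := by nlinarith
    calc R₀ * η z ≤ R₀ * (κ * (Real.sqrt δ * dz)) := by nlinarith [hR₀.1]
      _ = s * dz := by ring
  -- the integrand vanishes on Ω
  have hzero : ∀ y ∈ Ω, ρδα x y * φ y = 0 := by
    intro y hy
    by_cases hfar : R₀ * max (η x) (η y) < dist x y
    · rw [hker x y hfar, zero_mul]
    · push_neg at hfar
      have hxd0 : 0 ≤ infDist x (frontier Ω) := infDist_nonneg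
      have hyd0 : 0 ≤ infDist y (frontier Ω) := infDist_nonneg
      have htri : infDist y (frontier Ω) ≤ infDist x (frontier Ω) + dist y x :=
        infDist_le_infDist_add_dist
      rw [dist_comm y x] at htri
      have hmax : R₀ * max (η x) (η y) ≤
          s * max (infDist x (frontier Ω)) (infDist y (frontier Ω)) := by
        rcases le_total (η x) (η y) with h | h
        · rw [max_eq_right h]
          exact (key y hy).trans (mul_le_mul_of_nonneg_left (le_max_right _ _) hs0.le)
        · rw [max_eq_left h]
          exact (key x hx).trans (mul_le_mul_of_nonneg_left (le_max_left _ _) hs0.le)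
      have hxineq : infDist x (frontier Ω) * (1 + s) ≤ (1 - s) * Real.sqrt r := by
        have h1s : (0:ℝ) < 1 + s := by linarith
        rw [div_mul_eq_mul_div, le_div_iff₀ h1s] at hxd
        linarith [hxd]
      have hfin : infDist y (frontier Ω) ≤ Real.sqrt r := by
        rcases max_cases (infDist x (frontier Ω)) (infDist y (frontier Ω)) with
          ⟨h, hge⟩ | ⟨h, hge⟩
        · rw [h] at hmax
          nlinarith
        · rw [h] at hmax
          nlinarith
      rw [hφsupp y hfin, mul_zero]
  have hint : ∫ y in Ω, ρδα x y * φ y = 0 :=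
    setIntegral_eq_zero_of_forall_eq_zero hzero
  rw [hint, mul_zero]
end

section
/- Under the standing assumptions with the normalization ∫_{B(0,1)}|z|²ρ(|z|)dz = d, for any u, v ∈ C²(closure of Ω), the nonlocal bilinear form B_{ρ,δ}(u,v) = ∫_Ω∫_Ω ρ_{δ,2}(x,y)(u(x)−u(y))(v(x)−v(y)) dy dx converges to ∫_Ω ∇u·∇v dx as δ → 0. -/
open MeasureTheory Metric Filter

lemma aux_integrable {d : ℕ} (ρ : ℝ → ℝ) (hρc : Continuous ρ) (R₀ : ℝ)
    (hsupp : ∀ r, R₀ ≤ r → ρ r = 0)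
    (f : EuclideanSpace ℝ (Fin d) → ℝ) (hf : Continuous f) :
    Integrable (fun z : EuclideanSpace ℝ (Fin d) => f z * ρ ‖z‖) := by
  apply Continuous.integrable_of_hasCompactSupport (hf.mul (hρc.comp continuous_norm))
  apply HasCompactSupport.intro (isCompact_closedBall (0 : EuclideanSpace ℝ (Fin d)) R₀)
  intro z hz
  simp only [mem_closedBall, dist_zero_right, not_le] at hz
  simp only [Pi.mul_apply, Function.comp_apply]
  rw [hsupp _ hz.le, mul_zero]

lemma moment_eq {d : ℕ} (hd : 1 ≤ d) (ρ : ℝ → ℝ) (hρc : Continuous ρ) (R₀ : ℝ) (hR₀ : R₀ < 1)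
    (hsupp : ∀ r, R₀ ≤ r → ρ r = 0)
    (hnorm : ∫ z in Metric.ball (0 : EuclideanSpace ℝ (Fin d)) 1, ‖z‖ ^ 2 * ρ ‖z‖ = d)
    (i j : Fin d) :
    (∫ z : EuclideanSpace ℝ (Fin d), z i * z j * ρ ‖z‖) = if i = j then 1 else 0 := by
  have hint : ∀ k l : Fin d, Integrable (fun z : EuclideanSpace ℝ (Fin d) => z k * z l * ρ ‖z‖) :=
    fun k l => aux_integrable ρ hρc R₀ hsupp _
      (((EuclideanSpace.proj k).continuous).mul ((EuclideanSpace.proj l).continuous))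
  have hnorm' : (∫ z : EuclideanSpace ℝ (Fin d), ‖z‖ ^ 2 * ρ ‖z‖) = d := by
    rw [← hnorm]
    symm
    apply setIntegral_eq_integral_of_forall_compl_eq_zero
    intro z hz
    simp only [mem_ball, dist_zero_right, not_lt] at hz
    rw [hsupp _ (hR₀.le.trans hz), mul_zero]
  by_cases hij : i = j
  · subst hij
    simp only [if_pos rfl]
    -- all diagonal moments are equal
    have key : ∀ k : Fin d, (∫ z : EuclideanSpace ℝ (Fin d), z k * z k * ρ ‖z‖)
        = ∫ z : EuclideanSpace ℝ (Fin d), z i * z i * ρ ‖z‖ := by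
      intro k
      set T : EuclideanSpace ℝ (Fin d) ≃ₗᵢ[ℝ] EuclideanSpace ℝ (Fin d) :=
        LinearIsometryEquiv.piLpCongrLeft 2 ℝ ℝ (Equiv.swap i k)
      have hT : ∀ z, T z k = z i := by
        intro z
        simp [T, LinearIsometryEquiv.piLpCongrLeft_apply, Equiv.piCongrLeft'_apply,
          Equiv.piCongrLeft'_apply]
      have := T.measurePreserving.integral_comp T.toHomeomorph.measurableEmbedding
        (fun z : EuclideanSpace ℝ (Fin d) => z k * z k * ρ ‖z‖)
      rw [← this]
      congr 1
      ext z
      rw [hT z, T.norm_map]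
    -- sum of diagonal moments equals d
    have hsum : (∑ k : Fin d, ∫ z : EuclideanSpace ℝ (Fin d), z k * z k * ρ ‖z‖) = d := by
      rw [← integral_finset_sum _ (fun k _ => hint k k), ← hnorm']
      congr 1
      ext z
      rw [← Finset.sum_mul]
      congr 1
      rw [PiLp.norm_sq_eq_of_L2]
      exact Finset.sum_congr rfl fun k _ => by
        rw [Real.norm_eq_abs, sq_abs, sq]
    have h2 : (∑ k : Fin d, ∫ z : EuclideanSpace ℝ (Fin d), z k * z k * ρ ‖z‖)
        = (d : ℝ) * ∫ z : EuclideanSpace ℝ (Fin d), z i * z i * ρ ‖z‖ := by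
      rw [Finset.sum_congr rfl fun k _ => key k, Finset.sum_const, Finset.card_univ,
        Fintype.card_fin, nsmul_eq_mul]
    have hthis : (d : ℝ) * (∫ z : EuclideanSpace ℝ (Fin d), z i * z i * ρ ‖z‖) = d :=
      h2 ▸ hsum
    have hd0 : (0 : ℝ) < (d : ℝ) := by
      exact_mod_cast Nat.lt_of_lt_of_le Nat.zero_lt_one hd
    simp only [if_pos trivial]
    nlinarith [hthis]
  · -- off-diagonal: use reflection in coordinate j
    simp only [if_neg hij]
    set T : EuclideanSpace ℝ (Fin d) ≃ₗᵢ[ℝ] EuclideanSpace ℝ (Fin d) :=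
      LinearIsometryEquiv.piLpCongrRight 2
        (fun k : Fin d => if k = j then LinearIsometryEquiv.neg ℝ else LinearIsometryEquiv.refl ℝ ℝ)
    have hTj : ∀ z : EuclideanSpace ℝ (Fin d), T z j = -(z j) := by
      intro z
      simp [T, LinearIsometryEquiv.piLpCongrRight_apply]
    have hTi : ∀ z : EuclideanSpace ℝ (Fin d), T z i = z i := by
      intro z
      simp [T, LinearIsometryEquiv.piLpCongrRight_apply, if_neg hij]
    have hcomp := T.measurePreserving.integral_comp T.toHomeomorph.measurableEmbedding
      (fun z : EuclideanSpace ℝ (Fin d) => z i * z j * ρ ‖z‖)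
    have heq : (∫ z : EuclideanSpace ℝ (Fin d), z i * z j * ρ ‖z‖)
        = -∫ z : EuclideanSpace ℝ (Fin d), z i * z j * ρ ‖z‖ := by
      conv_lhs => rw [← hcomp]
      rw [← integral_neg]
      congr 1
      ext z
      rw [hTi z, hTj z, T.norm_map]
      ring
    linarith

lemma ball_infDist_frontier_subset {E : Type*} [NormedAddCommGroup E] [NormedSpace ℝ E]
    {Ω : Set E} (hΩo : IsOpen Ω) {x : E} (hx : x ∈ Ω) :
    ball x (infDist x (frontier Ω)) ⊆ Ω := by
  set r := infDist x (frontier Ω) with hr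
  rcases le_or_gt r 0 with h | h
  · rw [ball_eq_empty.2 h]; exact Set.empty_subset _
  · have hdis : Disjoint (frontier Ω) (ball x r) := by
      rw [Set.disjoint_left]
      intro z hz hzb
      rw [mem_ball, dist_comm] at hzb
      exact absurd (infDist_le_dist_of_mem hz) (not_le.2 hzb)
    have hclopen := isClopen_preimage_val hΩo hdis
    haveI : PreconnectedSpace (ball x r) :=
      Subtype.preconnectedSpace (convex_ball x r).isPreconnected
    have hne : (Subtype.val ⁻¹' Ω : Set (ball x r)).Nonempty :=
      ⟨⟨x, mem_ball_self h⟩, hx⟩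
    have huniv := hclopen.eq_univ hne
    intro y hy
    have hmem : (⟨y, hy⟩ : ball x r) ∈ (Subtype.val ⁻¹' Ω : Set (ball x r)) := by
      rw [huniv]; trivial
    exact hmem

lemma pairing_eq {d : ℕ} (hd : 1 ≤ d) (ρ : ℝ → ℝ) (hρc : Continuous ρ) (R₀ : ℝ) (hR₀ : R₀ < 1)
    (hsupp : ∀ r, R₀ ≤ r → ρ r = 0)
    (hnorm : ∫ z in Metric.ball (0 : EuclideanSpace ℝ (Fin d)) 1, ‖z‖ ^ 2 * ρ ‖z‖ = d)
    (A B : EuclideanSpace ℝ (Fin d) →L[ℝ] ℝ) :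
    (∫ z : EuclideanSpace ℝ (Fin d), A z * B z * ρ ‖z‖)
      = ∑ i : Fin d, A (EuclideanSpace.single i 1) * B (EuclideanSpace.single i 1) := by
  have hz : ∀ z : EuclideanSpace ℝ (Fin d), ∀ C : EuclideanSpace ℝ (Fin d) →L[ℝ] ℝ,
      C z = ∑ i : Fin d, z i * C (EuclideanSpace.single i 1) := by
    intro z C
    have hzrep : z = ∑ i : Fin d, z i • EuclideanSpace.single i (1 : ℝ) := by
      ext j
      have : (∑ i : Fin d, z i • EuclideanSpace.single i (1 : ℝ)) j
          = ∑ i : Fin d, (z i • EuclideanSpace.single i (1 : ℝ)) j := by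
        simp only [WithLp.ofLp_sum, Finset.sum_apply]
      rw [this]
      simp [EuclideanSpace.single_apply]
    conv_lhs => rw [hzrep]
    rw [map_sum]
    exact Finset.sum_congr rfl fun i _ => by rw [C.map_smul, smul_eq_mul]
  have key : ∀ z : EuclideanSpace ℝ (Fin d), A z * B z * ρ ‖z‖
      = ∑ i : Fin d, ∑ j : Fin d, (A (EuclideanSpace.single i 1) * B (EuclideanSpace.single j 1))
          * (z i * z j * ρ ‖z‖) := by
    intro z
    rw [hz z A, hz z B, Finset.sum_mul_sum, Finset.sum_mul]
    exact Finset.sum_congr rfl fun i _ => by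
      rw [Finset.sum_mul]
      exact Finset.sum_congr rfl fun j _ => by ring
  calc (∫ z : EuclideanSpace ℝ (Fin d), A z * B z * ρ ‖z‖)
      = ∫ z : EuclideanSpace ℝ (Fin d), ∑ i : Fin d, ∑ j : Fin d,
          (A (EuclideanSpace.single i 1) * B (EuclideanSpace.single j 1))
            * (z i * z j * ρ ‖z‖) := by
        exact integral_congr_ae (Filter.Eventually.of_forall key)
    _ = ∑ i : Fin d, ∑ j : Fin d, (A (EuclideanSpace.single i 1) * B (EuclideanSpace.single j 1))
          * ∫ z : EuclideanSpace ℝ (Fin d), z i * z j * ρ ‖z‖ := by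
        have hint : ∀ k l : Fin d,
            Integrable (fun z : EuclideanSpace ℝ (Fin d) => z k * z l * ρ ‖z‖) :=
          fun k l => aux_integrable ρ hρc R₀ hsupp _
            (((EuclideanSpace.proj k).continuous).mul ((EuclideanSpace.proj l).continuous))
        rw [integral_finset_sum _
          (fun i _ => integrable_finset_sum _ (fun j _ => ((hint i j).const_mul _)))]
        refine Finset.sum_congr rfl fun i _ => ?_
        rw [integral_finset_sum _ (fun j _ => ((hint i j).const_mul _))]
        exact Finset.sum_congr rfl fun j _ => integral_const_mul _ _
    _ = ∑ i : Fin d, A (EuclideanSpace.single i 1) * B (EuclideanSpace.single i 1) := by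
        rw [Finset.sum_congr rfl fun i _ => Finset.sum_congr rfl fun j _ => by
          rw [moment_eq hd ρ hρc R₀ hR₀ hsupp hnorm i j]]
        simp [Finset.sum_ite_eq']

lemma exists_rho_bound (ρ : ℝ → ℝ) (hρc : Continuous ρ) (R₀ : ℝ)
    (hsupp : ∀ r, R₀ ≤ r → ρ r = 0) :
    ∃ M : ℝ, 0 ≤ M ∧ ∀ r : ℝ, 0 ≤ r → |ρ r| ≤ M := by
  obtain ⟨M, hM⟩ := (isCompact_Icc (a := (0:ℝ)) (b := R₀)).exists_bound_of_continuousOn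
    hρc.continuousOn
  refine ⟨max M 0, le_max_right _ _, fun r hr => ?_⟩
  by_cases h : r ≤ R₀
  · exact le_trans (by simpa using hM r ⟨hr, h⟩) (le_max_left _ _)
  · rw [hsupp r (not_le.1 h).le, abs_zero]
    exact le_max_right _ _

lemma exists_lip {d : ℕ} {s : Set (EuclideanSpace ℝ (Fin d))} (hs : Convex ℝ s)
    (hK : IsCompact s) (w : EuclideanSpace ℝ (Fin d) → ℝ) (hw : ContDiff ℝ 2 w) :
    ∃ C : ℝ, 0 ≤ C ∧ ∀ a ∈ s, ∀ b ∈ s, |w a - w b| ≤ C * dist a b := by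
  obtain ⟨M, hM⟩ := hK.exists_bound_of_continuousOn
    ((hw.continuous_fderiv (by simp)).continuousOn)
  refine ⟨max M 0, le_max_right _ _, fun a ha b hb => ?_⟩
  have := hs.norm_image_sub_le_of_norm_fderiv_le (C := max M 0)
    (fun y _ => (hw.differentiable (by simp)).differentiableAt)
    (fun y hy => le_trans (hM y hy) (le_max_left _ _)) hb ha
  rw [Real.norm_eq_abs] at this
  rw [dist_eq_norm]
  exact this

lemma slope_tendsto_fderiv {d : ℕ} (u : EuclideanSpace ℝ (Fin d) → ℝ) (hu : ContDiff ℝ 2 u)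
    (x z : EuclideanSpace ℝ (Fin d)) :
    Tendsto (fun δ : ℝ => (u (x + δ • z) - u x) / δ) (nhdsWithin 0 (Set.Ioi 0))
      (nhds (fderiv ℝ u x z)) := by
  have hc : HasDerivAt (fun t : ℝ => x + t • z) z 0 := by
    simpa using ((hasDerivAt_id (0:ℝ)).smul_const z).const_add x
  have hder : HasDerivAt (fun t : ℝ => u (x + t • z)) (fderiv ℝ u x z) 0 := by
    have hfd := ((hu.differentiable (by simp)) (x + (0:ℝ) • z)).hasFDerivAt
    have h2 := hfd.comp_hasDerivAt 0 hc
    simp only [zero_smul, add_zero] at h2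
    exact h2
  have h3 := hasDerivAt_iff_tendsto_slope.1 hder
  have h4 : Tendsto (slope (fun t : ℝ => u (x + t • z)) 0) (nhdsWithin 0 (Set.Ioi 0))
      (nhds (fderiv ℝ u x z)) :=
    h3.mono_left (nhdsWithin_mono 0 fun t ht => Set.mem_compl_singleton_iff.2 (ne_of_gt ht))
  refine h4.congr fun δ => ?_
  rw [slope_def_field]
  simp

lemma inner_limit {d : ℕ} (hd : 1 ≤ d)
    (ρ : ℝ → ℝ) (hρc : Continuous ρ) (hρnn : ∀ r : ℝ, 0 ≤ ρ r)
    (R₀ : ℝ) (hR₀ : R₀ ∈ Set.Ioo (0:ℝ) 1) (hsupp : ∀ r : ℝ, R₀ ≤ r → ρ r = 0)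
    (hnorm : ∫ z in Metric.ball (0 : EuclideanSpace ℝ (Fin d)) 1, ‖z‖ ^ 2 * ρ ‖z‖ = d)
    (Ω : Set (EuclideanSpace ℝ (Fin d)))
    (u v : EuclideanSpace ℝ (Fin d) → ℝ) (hu : ContDiff ℝ 2 u) (hv : ContDiff ℝ 2 v)
    (x : EuclideanSpace ℝ (Fin d)) (rx : ℝ) (hrx : 0 < rx) (hball : ball x rx ⊆ Ω) :
    Tendsto (fun δ : ℝ => ∫ y in Ω,
        δ ^ (-((d:ℝ)+2)) * ρ (dist y x / δ) * (u x - u y) * (v x - v y))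
      (nhdsWithin 0 (Set.Ioi 0))
      (nhds (∑ i : Fin d, fderiv ℝ u x (EuclideanSpace.single i 1)
        * fderiv ℝ v x (EuclideanSpace.single i 1))) := by
  obtain ⟨Mρ, hMρ0, hMρ⟩ := exists_rho_bound ρ hρc R₀ hsupp
  obtain ⟨Cu, hCu0, hCu⟩ := exists_lip (convex_closedBall x 1) (isCompact_closedBall x 1) u hu
  obtain ⟨Cv, hCv0, hCv⟩ := exists_lip (convex_closedBall x 1) (isCompact_closedBall x 1) v hv
  set g : ℝ → EuclideanSpace ℝ (Fin d) → ℝ := fun δ z =>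
    ((u (x + δ • z) - u x) / δ) * ((v (x + δ • z) - v x) / δ) * ρ ‖z‖ with hg
  have hεpos : 0 < min 1 (rx / R₀) := lt_min one_pos (div_pos hrx hR₀.1)
  have hεmem : Set.Ioo (0:ℝ) (min 1 (rx / R₀)) ∈ nhdsWithin (0:ℝ) (Set.Ioi 0) :=
    Ioo_mem_nhdsGT_of_mem ⟨le_refl 0, hεpos⟩
  have hGlim : Tendsto (fun δ => ∫ z, g δ z) (nhdsWithin 0 (Set.Ioi 0))
      (nhds (∫ z : EuclideanSpace ℝ (Fin d), fderiv ℝ u x z * fderiv ℝ v x z * ρ ‖z‖)) := by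
    apply tendsto_integral_filter_of_dominated_convergence
      (bound := (closedBall (0 : EuclideanSpace ℝ (Fin d)) R₀).indicator
        (fun _ => Cu * R₀ * (Cv * R₀) * Mρ))
    · filter_upwards [self_mem_nhdsWithin] with δ _
      apply Continuous.aestronglyMeasurable
      have h1 : Continuous fun z : EuclideanSpace ℝ (Fin d) => x + δ • z :=
        continuous_const.add (continuous_id.const_smul δ)
      exact (((hu.continuous.comp h1).sub continuous_const).div_const δ).mul
        (((hv.continuous.comp h1).sub continuous_const).div_const δ) |>.mul
        (hρc.comp continuous_norm)
    · filter_upwards [hεmem] with δ hδ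
      apply Eventually.of_forall
      intro z
      have hδ0 : 0 < δ := hδ.1
      have hδ1 : δ ≤ 1 := (hδ.2.trans_le (min_le_left _ _)).le
      by_cases hzR : R₀ ≤ ‖z‖
      · have : g δ z = 0 := by rw [hg]; simp only; rw [hsupp _ hzR, mul_zero]
        rw [this, norm_zero]
        exact Set.indicator_nonneg (fun _ _ => mul_nonneg (mul_nonneg (mul_nonneg hCu0 hR₀.1.le) (mul_nonneg hCv0 hR₀.1.le)) hMρ0) z
      · push_neg at hzR
        have hz1 : dist (x + δ • z) x = δ * ‖z‖ := by
          rw [dist_eq_norm, add_sub_cancel_left, norm_smul, Real.norm_eq_abs, abs_of_pos hδ0]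
        have hmem : x + δ • z ∈ closedBall x 1 := by
          rw [mem_closedBall, hz1]
          nlinarith [hR₀.2, norm_nonneg z, hzR]
        have hu' : |u (x + δ • z) - u x| ≤ Cu * (δ * ‖z‖) := by
          have h := hCu _ hmem _ (mem_closedBall_self one_pos.le)
          rwa [hz1] at h
        have hv' : |v (x + δ • z) - v x| ≤ Cv * (δ * ‖z‖) := by
          have h := hCv _ hmem _ (mem_closedBall_self one_pos.le)
          rwa [hz1] at h
        have h1 : |u (x + δ • z) - u x| / δ ≤ Cu * R₀ := by
          rw [div_le_iff₀ hδ0]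
          calc |u (x + δ • z) - u x| ≤ Cu * (δ * ‖z‖) := hu'
            _ = Cu * δ * ‖z‖ := by ring
            _ ≤ Cu * δ * R₀ := mul_le_mul_of_nonneg_left hzR.le (mul_nonneg hCu0 hδ0.le)
            _ = Cu * R₀ * δ := by ring
        have h2 : |v (x + δ • z) - v x| / δ ≤ Cv * R₀ := by
          rw [div_le_iff₀ hδ0]
          calc |v (x + δ • z) - v x| ≤ Cv * (δ * ‖z‖) := hv'
            _ = Cv * δ * ‖z‖ := by ring
            _ ≤ Cv * δ * R₀ := mul_le_mul_of_nonneg_left hzR.le (mul_nonneg hCv0 hδ0.le)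
            _ = Cv * R₀ * δ := by ring
        have h3 : |ρ ‖z‖| ≤ Mρ := hMρ _ (norm_nonneg z)
        have hzmem : z ∈ closedBall (0 : EuclideanSpace ℝ (Fin d)) R₀ := by
          rw [mem_closedBall, dist_zero_right]; exact hzR.le
        rw [Set.indicator_of_mem hzmem]
        rw [hg]
        simp only [Real.norm_eq_abs, abs_mul, abs_div, abs_of_pos hδ0]
        exact mul_le_mul (mul_le_mul h1 h2 (div_nonneg (abs_nonneg _) hδ0.le)
            (mul_nonneg hCu0 hR₀.1.le)) h3 (abs_nonneg _)
          (mul_nonneg (mul_nonneg hCu0 hR₀.1.le) (mul_nonneg hCv0 hR₀.1.le))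
    · exact (integrableOn_const
        measure_closedBall_lt_top.ne).integrable_indicator measurableSet_closedBall
    · apply Eventually.of_forall
      intro z
      have h1 := slope_tendsto_fderiv u hu x z
      have h2 := slope_tendsto_fderiv v hv x z
      exact (h1.mul h2).mul_const (ρ ‖z‖)
  have hEq : ∀ᶠ δ in nhdsWithin (0:ℝ) (Set.Ioi 0),
      (∫ z, g δ z) = ∫ y in Ω, δ ^ (-((d:ℝ)+2)) * ρ (dist y x / δ) * (u x - u y) * (v x - v y) := by
    filter_upwards [hεmem] with δ hδ
    have hδ0 : 0 < δ := hδ.1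
    have hδrx : δ * R₀ < rx := by
      have h := hδ.2.trans_le (min_le_right _ _)
      calc δ * R₀ < rx / R₀ * R₀ := by nlinarith [hR₀.1]
        _ = rx := div_mul_cancel₀ rx hR₀.1.ne'
    set f : EuclideanSpace ℝ (Fin d) → ℝ := fun y =>
      δ ^ (-((d:ℝ)+2)) * ρ (dist y x / δ) * (u x - u y) * (v x - v y) with hf
    have hsupport : ∀ y, y ∉ Ω → f y = 0 := by
      intro y hy
      have hdist : rx ≤ dist y x := by
        by_contra h
        push_neg at h
        exact hy (hball (by rwa [mem_ball]))
      have hge : R₀ ≤ dist y x / δ := by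
        rw [le_div_iff₀ hδ0]
        calc R₀ * δ = δ * R₀ := mul_comm _ _
          _ ≤ rx := hδrx.le
          _ ≤ dist y x := hdist
      rw [hf]; simp only; rw [hsupp _ hge]
      ring
    rw [setIntegral_eq_integral_of_forall_compl_eq_zero fun y hy => hsupport y hy]
    have htrans : (∫ y, f y) = ∫ w, f (x + w) := (integral_add_left_eq_self f x).symm
    have hscale : (∫ w, f (x + w)) = (δ ^ d) • ∫ z, f (x + δ • z) := by
      have h := Measure.integral_comp_smul (volume : Measure (EuclideanSpace ℝ (Fin d)))
        (fun w => f (x + w)) δ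
      rw [finrank_euclideanSpace_fin] at h
      rw [h, abs_of_pos (by positivity : (0:ℝ) < (δ ^ d)⁻¹), smul_smul,
        mul_inv_cancel₀ (by positivity), one_smul]
    have hcomp : ∀ z, (δ ^ d) * f (x + δ • z) = g δ z := by
      intro z
      rw [hf, hg]
      simp only
      have hdist : dist (x + δ • z) x = δ * ‖z‖ := by
        rw [dist_eq_norm, add_sub_cancel_left, norm_smul, Real.norm_eq_abs, abs_of_pos hδ0]
      rw [hdist]
      have hdd : δ * ‖z‖ / δ = ‖z‖ := by field_simp
      rw [hdd]
      have hrpow : δ ^ (-((d:ℝ)+2)) = (δ ^ (d+2) : ℝ)⁻¹ := by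
        rw [show -((d:ℝ)+2) = -((d+2 : ℕ) : ℝ) by push_cast; ring,
          Real.rpow_neg hδ0.le, Real.rpow_natCast]
      rw [hrpow]
      have hδne : δ ≠ 0 := hδ0.ne'
      field_simp
      ring
    rw [htrans, hscale, smul_eq_mul, ← integral_const_mul]
    exact integral_congr_ae (Eventually.of_forall fun z => (hcomp z).symm)
  have hpair := pairing_eq hd ρ hρc R₀ hR₀.2 hsupp hnorm (fderiv ℝ u x) (fderiv ℝ v x)
  rw [← hpair]
  exact hGlim.congr' hEq

lemma kernel_integrable {d : ℕ} (ρ : ℝ → ℝ) (hρc : Continuous ρ) (R₀ : ℝ) (hR₀ : 0 < R₀)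
    (hsupp : ∀ r : ℝ, R₀ ≤ r → ρ r = 0)
    (u v : EuclideanSpace ℝ (Fin d) → ℝ) (hu : Continuous u) (hv : Continuous v)
    (x : EuclideanSpace ℝ (Fin d)) (e : ℝ) (he : 0 < e) :
    Integrable (fun y : EuclideanSpace ℝ (Fin d) =>
      e ^ (-((d:ℝ)+2)) * ρ (dist y x / e) * (u x - u y) * (v x - v y)) := by
  apply Continuous.integrable_of_hasCompactSupport
  · exact (((continuous_const.mul
      (hρc.comp ((continuous_id.dist continuous_const).div_const e))).mul
      (continuous_const.sub hu)).mul (continuous_const.sub hv))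
  · apply HasCompactSupport.intro (isCompact_closedBall x (R₀ * e))
    intro y hy
    simp only [mem_closedBall, not_le] at hy
    have : R₀ ≤ dist y x / e := by
      rw [le_div_iff₀ he]
      exact hy.le
    rw [hsupp _ this]
    ring

lemma kernel_bound {d : ℕ} (hd : 1 ≤ d) (ρ : ℝ → ℝ) (R₀ : ℝ) (hR₀ : 0 < R₀)
    (hsupp : ∀ r : ℝ, R₀ ≤ r → ρ r = 0)
    (Mρ : ℝ) (hMρ0 : 0 ≤ Mρ) (hMρ : ∀ r : ℝ, 0 ≤ r → |ρ r| ≤ Mρ)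
    (Ω : Set (EuclideanSpace ℝ (Fin d))) (hΩ : MeasurableSet Ω)
    (u v : EuclideanSpace ℝ (Fin d) → ℝ)
    (Cu Cv : ℝ) (hCu0 : 0 ≤ Cu) (hCv0 : 0 ≤ Cv)
    (x : EuclideanSpace ℝ (Fin d)) (hx : x ∈ Ω)
    (hLu : ∀ y ∈ Ω, |u x - u y| ≤ Cu * dist y x)
    (hLv : ∀ y ∈ Ω, |v x - v y| ≤ Cv * dist y x)
    (e : ℝ) (he : 0 < e) :
    (∫ y in Ω, ‖e ^ (-((d:ℝ)+2)) * ρ (dist y x / e) * (u x - u y) * (v x - v y)‖)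
      ≤ Mρ * Cu * Cv * R₀^(d+2) *
        (volume (ball (0 : EuclideanSpace ℝ (Fin d)) 1)).toReal := by
  haveI : Nontrivial (EuclideanSpace ℝ (Fin d)) :=
    Module.nontrivial_of_finrank_pos (R := ℝ)
      (by rw [finrank_euclideanSpace_fin]; omega)
  set c : ℝ := e ^ (-((d:ℝ)+2)) * Mρ * (Cu * (R₀ * e)) * (Cv * (R₀ * e)) with hc
  have hrpow : e ^ (-((d:ℝ)+2)) = (e ^ (d+2) : ℝ)⁻¹ := by
    rw [show -((d:ℝ)+2) = -((d+2 : ℕ) : ℝ) by push_cast; ring,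
      Real.rpow_neg he.le, Real.rpow_natCast]
  have hrpow_nn : 0 ≤ e ^ (-((d:ℝ)+2)) := by rw [hrpow]; positivity
  have hcnn : 0 ≤ c := by
    apply mul_nonneg (mul_nonneg (mul_nonneg hrpow_nn hMρ0) _) _ <;> positivity
  set g : EuclideanSpace ℝ (Fin d) → ℝ :=
    (ball x (R₀ * e)).indicator (fun _ => c) with hgdef
  have hgint : Integrable g (volume.restrict Ω) := by
    apply Integrable.restrict
    exact (integrableOn_const measure_ball_lt_top.ne).integrable_indicator
      measurableSet_ball
  have hgb : ∀ y ∈ Ω, ‖e ^ (-((d:ℝ)+2)) * ρ (dist y x / e) * (u x - u y) * (v x - v y)‖ ≤ g y := by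
    intro y hy
    by_cases hyb : dist y x < R₀ * e
    · rw [hgdef, Set.indicator_of_mem (by rwa [mem_ball])]
      have hdyx : dist y x < R₀ * e := hyb
      have hρb : |ρ (dist y x / e)| ≤ Mρ := hMρ _ (by positivity)
      have hub : |u x - u y| ≤ Cu * (R₀ * e) :=
        (hLu y hy).trans (mul_le_mul_of_nonneg_left hdyx.le hCu0)
      have hvb : |v x - v y| ≤ Cv * (R₀ * e) :=
        (hLv y hy).trans (mul_le_mul_of_nonneg_left hdyx.le hCv0)
      rw [Real.norm_eq_abs, abs_mul, abs_mul, abs_mul, abs_of_nonneg hrpow_nn, hc]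
      exact mul_le_mul (mul_le_mul (mul_le_mul_of_nonneg_left hρb hrpow_nn) hub (abs_nonneg _)
        (mul_nonneg hrpow_nn hMρ0)) hvb (abs_nonneg _) (by positivity)
    · push_neg at hyb
      have hge : R₀ ≤ dist y x / e := by rw [le_div_iff₀ he]; exact hyb
      rw [hsupp _ hge]
      have hnot : y ∉ ball x (R₀ * e) := by rw [mem_ball]; exact not_lt.2 hyb
      rw [hgdef, Set.indicator_of_notMem hnot]
      simp [hcnn]
  calc (∫ y in Ω, ‖e ^ (-((d:ℝ)+2)) * ρ (dist y x / e) * (u x - u y) * (v x - v y)‖)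
      ≤ ∫ y in Ω, g y := by
        apply integral_mono_of_nonneg (Eventually.of_forall fun y => norm_nonneg _) hgint
        rw [Filter.EventuallyLE, ae_restrict_iff' hΩ]
        exact Eventually.of_forall hgb
    _ ≤ ∫ y, g y := setIntegral_le_integral
        ((integrableOn_const measure_ball_lt_top.ne).integrable_indicator
          measurableSet_ball)
        (Eventually.of_forall (Set.indicator_nonneg (fun _ _ => hcnn)))
    _ = (volume (ball x (R₀ * e))).toReal * c := by
        rw [hgdef, integral_indicator_const _ measurableSet_ball, smul_eq_mul, measureReal_def]
    _ = (R₀ * e)^d * (volume (ball (0 : EuclideanSpace ℝ (Fin d)) 1)).toReal * c := by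
        rw [Measure.addHaar_ball volume x (by positivity : (0:ℝ) ≤ R₀ * e),
          finrank_euclideanSpace_fin, ENNReal.toReal_mul,
          ENNReal.toReal_ofReal (by positivity)]
    _ ≤ Mρ * Cu * Cv * R₀^(d+2) * (volume (ball (0 : EuclideanSpace ℝ (Fin d)) 1)).toReal := by
        rw [hc, hrpow]
        have hepos : (0:ℝ) < e ^ (d+2) := by positivity
        have heq : (R₀ * e)^d * (volume (ball (0 : EuclideanSpace ℝ (Fin d)) 1)).toReal *
            ((e ^ (d+2))⁻¹ * Mρ * (Cu * (R₀ * e)) * (Cv * (R₀ * e)))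
            = Mρ * Cu * Cv * R₀^(d+2) * (volume (ball (0 : EuclideanSpace ℝ (Fin d)) 1)).toReal := by
          field_simp
          ring
        rw [heq]

/-- Localization of the nonlocal bilinear form: for `u, v ∈ C²`,
`B_{ρ,δ}(u,v) = ∫_Ω∫_Ω ρ_{δ,2}(x,y)(u(x)−u(y))(v(x)−v(y)) dy dx → ∫_Ω ∇u·∇v dx`
as `δ → 0`. -/
theorem bilinear_form_localization {d : ℕ} (hd : 1 ≤ d)
    (Ω : Set (EuclideanSpace ℝ (Fin d))) (hΩo : IsOpen Ω) (hΩb : Bornology.IsBounded Ω)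
    (hΩne : Ω.Nonempty)
    (κ₀ κ₁ κb δ₀ : ℝ) (hκ₀ : κ₀ ∈ Set.Ioo (0 : ℝ) 1) (hκ₁ : 0 < κ₁) (hκb : 0 < κb)
    (hδ₀ : δ₀ ∈ Set.Ioo (0 : ℝ) 1)
    (ρ : ℝ → ℝ) (hρc : Continuous ρ) (hρnn : ∀ r : ℝ, 0 ≤ ρ r)
    (R₀ : ℝ) (hR₀ : R₀ ∈ Set.Ioo (0 : ℝ) 1) (hsupp : ∀ r : ℝ, R₀ ≤ r → ρ r = 0)
    (hnorm : ∫ z in Metric.ball (0 : EuclideanSpace ℝ (Fin d)) 1, ‖z‖ ^ 2 * ρ ‖z‖ = d)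
    (η : ℝ → EuclideanSpace ℝ (Fin d) → ℝ)
    (hηpos : ∀ δ ∈ Set.Ioo (0 : ℝ) δ₀, ∀ x ∈ Ω, 0 < η δ x)
    (hηδ : ∀ δ ∈ Set.Ioo (0 : ℝ) δ₀, ∀ x ∈ Ω,
      δ < κ₀ * (infDist x (frontier Ω)) ^ 2 → η δ x = δ)
    (hηub : ∀ δ ∈ Set.Ioo (0 : ℝ) δ₀, ∀ x ∈ Ω,
      η δ x ≤ κb * min δ ((infDist x (frontier Ω)) ^ 2))
    (hηC1 : ∀ δ ∈ Set.Ioo (0 : ℝ) δ₀, ∀ x ∈ Ω,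
      DifferentiableAt ℝ (η δ) x ∧ ‖fderiv ℝ (η δ) x‖ ≤ κ₁ * Real.sqrt δ)
    (ρδ2 : ℝ → EuclideanSpace ℝ (Fin d) → EuclideanSpace ℝ (Fin d) → ℝ)
    (hρδ2 : ∀ δ x y, ρδ2 δ x y =
      (1 / 2) * ((η δ x) ^ (-((d : ℝ) + 2)) * ρ (dist y x / η δ x) +
                 (η δ y) ^ (-((d : ℝ) + 2)) * ρ (dist y x / η δ y)))
    (u v : EuclideanSpace ℝ (Fin d) → ℝ) (hu : ContDiff ℝ 2 u) (hv : ContDiff ℝ 2 v)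
    (B : ℝ → ℝ)
    (hB : ∀ δ, B δ = ∫ x in Ω, ∫ y in Ω, ρδ2 δ x y * (u x - u y) * (v x - v y)) :
    Tendsto B (nhdsWithin (0 : ℝ) (Set.Ioi 0))
      (nhds (∫ x in Ω, ∑ i : Fin d,
        fderiv ℝ u x (EuclideanSpace.single i (1 : ℝ)) *
          fderiv ℝ v x (EuclideanSpace.single i (1 : ℝ)))) := by
  obtain ⟨hδ₀0, hδ₀1⟩ := hδ₀
  haveI : Nontrivial (EuclideanSpace ℝ (Fin d)) :=
    Module.nontrivial_of_finrank_pos (R := ℝ) (by rw [finrank_euclideanSpace_fin]; omega)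
  have hΩm : MeasurableSet Ω := hΩo.measurableSet
  have hΩfin : IsFiniteMeasure (volume.restrict Ω) :=
    ⟨by rw [Measure.restrict_apply_univ]; exact hΩb.measure_lt_top⟩
  obtain ⟨RΩ, hRΩ⟩ := hΩb.subset_closedBall 0
  obtain ⟨Mρ, hMρ0, hMρ⟩ := exists_rho_bound ρ hρc R₀ hsupp
  obtain ⟨Cu, hCu0, hCu⟩ := exists_lip (convex_closedBall (0 : EuclideanSpace ℝ (Fin d)) |RΩ|)
    (isCompact_closedBall _ _) u hu
  obtain ⟨Cv, hCv0, hCv⟩ := exists_lip (convex_closedBall (0 : EuclideanSpace ℝ (Fin d)) |RΩ|)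
    (isCompact_closedBall _ _) v hv
  have hΩball : Ω ⊆ closedBall (0 : EuclideanSpace ℝ (Fin d)) |RΩ| :=
    hRΩ.trans (closedBall_subset_closedBall (le_abs_self _))
  have hLu : ∀ x ∈ Ω, ∀ y ∈ Ω, |u x - u y| ≤ Cu * dist y x := fun x hx y hy => by
    have h := hCu x (hΩball hx) y (hΩball hy)
    rwa [dist_comm] at h
  have hLv : ∀ x ∈ Ω, ∀ y ∈ Ω, |v x - v y| ≤ Cv * dist y x := fun x hx y hy => by
    have h := hCv x (hΩball hx) y (hΩball hy)
    rwa [dist_comm] at h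
  set C : ℝ := Mρ * Cu * Cv * R₀^(d+2) *
    (volume (ball (0 : EuclideanSpace ℝ (Fin d)) 1)).toReal with hC
  set Kp : ℝ → (EuclideanSpace ℝ (Fin d) × EuclideanSpace ℝ (Fin d)) → ℝ := fun δ p =>
    η δ p.1 ^ (-((d:ℝ)+2)) * ρ (dist p.2 p.1 / η δ p.1) * (u p.1 - u p.2) * (v p.1 - v p.2)
    with hKpdef
  set G : ℝ → EuclideanSpace ℝ (Fin d) → ℝ := fun δ x => ∫ y in Ω, Kp δ (x, y) with hGdef
  -- continuity of η δ on Ω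
  have hηcont : ∀ δ ∈ Set.Ioo (0:ℝ) δ₀, ContinuousOn (η δ) Ω :=
    fun δ hδ x hx => ((hηC1 δ hδ x hx).1.continuousAt).continuousWithinAt
  -- measurability of the kernel on the product
  have hKpaesm : ∀ δ ∈ Set.Ioo (0:ℝ) δ₀, AEStronglyMeasurable (Kp δ)
      ((volume.restrict Ω).prod (volume.restrict Ω)) := by
    intro δ hδ
    have h1 : ContinuousOn (fun p : EuclideanSpace ℝ (Fin d) × EuclideanSpace ℝ (Fin d) =>
        η δ p.1) (Ω ×ˢ Ω) :=
      (hηcont δ hδ).comp continuous_fst.continuousOn fun p hp => hp.1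
    have hcont : ContinuousOn (Kp δ) (Ω ×ˢ Ω) := by
      apply ContinuousOn.mul
      apply ContinuousOn.mul
      apply ContinuousOn.mul
      · exact h1.rpow_const fun p hp => Or.inl (hηpos δ hδ p.1 hp.1).ne'
      · apply hρc.comp_continuousOn
        exact ContinuousOn.div
          ((continuous_snd.dist continuous_fst).continuousOn) h1
          fun p hp => (hηpos δ hδ p.1 hp.1).ne'
      · exact ((hu.continuous.comp continuous_fst).sub
          (hu.continuous.comp continuous_snd)).continuousOn
      · exact ((hv.continuous.comp continuous_fst).sub
          (hv.continuous.comp continuous_snd)).continuousOn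
    have h2 := hcont.aestronglyMeasurable
      (μ := (volume.prod volume : Measure (EuclideanSpace ℝ (Fin d) × EuclideanSpace ℝ (Fin d))))
      (hΩm.prod hΩm)
    rwa [← Measure.prod_restrict] at h2
  -- integrability of y-sections
  have hsec : ∀ δ ∈ Set.Ioo (0:ℝ) δ₀, ∀ x ∈ Ω,
      Integrable (fun y => Kp δ (x, y)) (volume.restrict Ω) := by
    intro δ hδ x hx
    exact (kernel_integrable ρ hρc R₀ hR₀.1 hsupp u v hu.continuous hv.continuous x
      (η δ x) (hηpos δ hδ x hx)).restrict
  -- uniform bound on the norm integral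
  have hnormb : ∀ δ ∈ Set.Ioo (0:ℝ) δ₀, ∀ x ∈ Ω, (∫ y in Ω, ‖Kp δ (x, y)‖) ≤ C := by
    intro δ hδ x hx
    exact kernel_bound hd ρ R₀ hR₀.1 hsupp Mρ hMρ0 hMρ Ω hΩm u v Cu Cv hCu0 hCv0 x hx
      (hLu x hx) (hLv x hx) (η δ x) (hηpos δ hδ x hx)
  have habs : ∀ δ ∈ Set.Ioo (0:ℝ) δ₀, ∀ x ∈ Ω, ‖G δ x‖ ≤ C := by
    intro δ hδ x hx
    exact (norm_integral_le_integral_norm _).trans (hnormb δ hδ x hx)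
  -- product integrability
  have hKpint : ∀ δ ∈ Set.Ioo (0:ℝ) δ₀, Integrable (Kp δ)
      ((volume.restrict Ω).prod (volume.restrict Ω)) := by
    intro δ hδ
    rw [integrable_prod_iff (hKpaesm δ hδ)]
    constructor
    · rw [ae_restrict_iff' hΩm]
      exact Eventually.of_forall fun x hx => hsec δ hδ x hx
    · apply Integrable.mono' (integrable_const C) ((hKpaesm δ hδ).norm.integral_prod_right')
      rw [ae_restrict_iff' hΩm]
      apply Eventually.of_forall
      intro x hx
      rw [Real.norm_eq_abs, abs_of_nonneg (integral_nonneg fun y => norm_nonneg _)]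
      exact hnormb δ hδ x hx
  -- Step A : B δ = ∫ G δ for δ ∈ Ioo 0 δ₀
  have hstepA : ∀ δ ∈ Set.Ioo (0:ℝ) δ₀, B δ = ∫ x in Ω, G δ x := by
    intro δ hδ
    have hKswap : Integrable (Kp δ ∘ Prod.swap) ((volume.restrict Ω).prod (volume.restrict Ω)) :=
      (hKpint δ hδ).swap
    have hsec2 : ∀ᵐ x ∂(volume.restrict Ω),
        Integrable (fun y => Kp δ (y, x)) (volume.restrict Ω) := by
      have h := hKswap.prod_right_ae
      simpa [Function.comp] using h
    have hinner : ∀ᵐ x ∂(volume.restrict Ω),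
        (∫ y in Ω, ρδ2 δ x y * (u x - u y) * (v x - v y))
          = (1/2) * ((∫ y in Ω, Kp δ (x, y)) + ∫ y in Ω, Kp δ (y, x)) := by
      filter_upwards [hsec2, ae_restrict_mem hΩm] with x hx2 hxΩ
      have hx1 := hsec δ hδ x hxΩ
      have hptw : ∀ y, ρδ2 δ x y * (u x - u y) * (v x - v y)
          = (1/2) * (Kp δ (x, y) + Kp δ (y, x)) := by
        intro y
        rw [hρδ2 δ x y]
        simp only [hKpdef]
        rw [dist_comm x y]
        ring
      rw [integral_congr_ae (Eventually.of_forall hptw)]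
      rw [integral_const_mul, integral_add hx1 hx2]
    have houter : B δ = ∫ x in Ω, (1/2) * ((∫ y in Ω, Kp δ (x, y)) + ∫ y in Ω, Kp δ (y, x)) := by
      rw [hB δ]
      exact integral_congr_ae hinner
    have hA1 : Integrable (fun x => ∫ y in Ω, Kp δ (x, y)) (volume.restrict Ω) :=
      (hKpint δ hδ).integral_prod_left
    have hA2 : Integrable (fun x => ∫ y in Ω, Kp δ (y, x)) (volume.restrict Ω) := by
      have h := hKswap.integral_prod_left
      simpa [Function.comp] using h
    have hswapid : (∫ x in Ω, ∫ y in Ω, Kp δ (y, x)) = ∫ x in Ω, ∫ y in Ω, Kp δ (x, y) := by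
      exact integral_integral_swap (f := fun x y => Kp δ (y, x)) hKswap
    rw [houter, integral_const_mul, integral_add hA1 hA2, hswapid]
    simp only [hGdef]
    ring
  -- Step B : Tendsto (fun δ => ∫ G δ)
  have hmemδ₀ : Set.Ioo (0:ℝ) δ₀ ∈ nhdsWithin (0:ℝ) (Set.Ioi 0) :=
    Ioo_mem_nhdsGT_of_mem ⟨le_refl 0, hδ₀0⟩
  have hfront : (frontier Ω).Nonempty := by
    rw [nonempty_frontier_iff]
    exact ⟨hΩne, fun h => NormedSpace.unbounded_univ ℝ (EuclideanSpace ℝ (Fin d)) (h ▸ hΩb)⟩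
  have hstepB : Tendsto (fun δ => ∫ x in Ω, G δ x) (nhdsWithin (0 : ℝ) (Set.Ioi 0))
      (nhds (∫ x in Ω, ∑ i : Fin d,
        fderiv ℝ u x (EuclideanSpace.single i (1 : ℝ)) *
          fderiv ℝ v x (EuclideanSpace.single i (1 : ℝ)))) := by
    apply tendsto_integral_filter_of_dominated_convergence (bound := fun _ => C)
    · filter_upwards [hmemδ₀] with δ hδ
      exact (hKpaesm δ hδ).integral_prod_right'
    · filter_upwards [hmemδ₀] with δ hδ
      rw [ae_restrict_iff' hΩm]
      exact Eventually.of_forall fun x hx => habs δ hδ x hx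
    · exact integrable_const C
    · rw [ae_restrict_iff' hΩm]
      apply Eventually.of_forall
      intro x hx
      have hxfr : x ∉ frontier Ω := fun h => (hΩo.frontier_eq ▸ h).2 hx
      have hrpos : 0 < infDist x (frontier Ω) :=
        (isClosed_frontier.notMem_iff_infDist_pos hfront).1 hxfr
      have hballr := ball_infDist_frontier_subset hΩo hx
      have hIL := inner_limit hd ρ hρc hρnn R₀ hR₀ hsupp hnorm Ω u v hu hv x _ hrpos hballr
      apply hIL.congr'
      have hmem2 : Set.Ioo (0:ℝ) (min δ₀ (κ₀ * (infDist x (frontier Ω))^2))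
          ∈ nhdsWithin (0:ℝ) (Set.Ioi 0) :=
        Ioo_mem_nhdsGT_of_mem ⟨le_refl 0, lt_min hδ₀0 (mul_pos hκ₀.1 (pow_pos hrpos 2))⟩
      filter_upwards [hmem2] with δ hδ2
      have hδΙ : δ ∈ Set.Ioo (0:ℝ) δ₀ := ⟨hδ2.1, hδ2.2.trans_le (min_le_left _ _)⟩
      have hηx : η δ x = δ := hηδ δ hδΙ x hx (hδ2.2.trans_le (min_le_right _ _))
      simp only [hGdef, hKpdef, hηx]
  apply hstepB.congr'
  filter_upwards [hmemδ₀] with δ hδ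
  exact (hstepA δ hδ).symm
end
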